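/- arXiv:1911.01502 — 8 statements merged into one kernel-verified Lean document; each statement's English description precedes it below -/
import Mathlib

section
/- A nonzero polynomial f ∈ F_q[x_1,...,x_n] of total degree at most d has at most d·q^{n-1} zeros in F_q^n. -/
open MvPolynomial Finset
open scoped Classical

lemma sz_key (F : Type*) [Field F] [Fintype F] :
    ∀ (n d : ℕ) (f : MvPolynomial (Fin n) F), f ≠ 0 → f.totalDegree ≤ d →
    (univ.filter (fun α : Fin n → F => eval α f = 0)).card * Fintype.card F
      ≤ d * (Fintype.card F) ^ n := by
  intro n
  induction n with
  | zero =>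
    intro d f hf hd
    obtain ⟨c, rfl⟩ := C_surjective (Fin 0) f
    have hc : c ≠ 0 := by simpa using hf
    have : (univ.filter (fun α : Fin 0 → F => eval α (C c) = 0)) = ∅ := by
      apply filter_eq_empty_iff.mpr
      intro α _
      simpa using hc
    rw [this]
    simp
  | succ n ih =>
    intro d f hf hd
    set q : ℕ := Fintype.card F with hqdef
    have hq1 : 1 ≤ q := Fintype.card_pos
    set p : Polynomial (MvPolynomial (Fin n) F) := finSuccEquiv F n f with hp
    have hp0 : p ≠ 0 := by
      intro h
      exact hf ((finSuccEquiv F n).injective (by rw [← hp, h, map_zero]))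
    set k : ℕ := p.natDegree with hk
    set g : MvPolynomial (Fin n) F := p.leadingCoeff with hg
    have hg0 : g ≠ 0 := Polynomial.leadingCoeff_ne_zero.mpr hp0
    have hdeg : g.totalDegree + k ≤ d := by
      refine le_trans ?_ hd
      exact totalDegree_coeff_finSuccEquiv_add_le f k
        (by rw [← hp]; exact Polynomial.leadingCoeff_ne_zero.mpr hp0)
    have hkd : k ≤ d := le_trans (Nat.le_add_left _ _) hdeg
    have hgd : g.totalDegree ≤ d - k := Nat.le_sub_of_add_le hdeg
    set S : Finset (Fin n → F) := univ.filter (fun s => eval s g = 0) with hS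
    have hScard : S.card * q ≤ (d - k) * q ^ n := ih (d - k) g hg0 hgd
    set Z : Finset (Fin (n+1) → F) := univ.filter (fun α => eval α f = 0) with hZ
    have hfib : Z.card = ∑ s : Fin n → F, (Z.filter (fun α => Fin.tail α = s)).card :=
      card_eq_sum_card_fiberwise (fun α _ => mem_univ _)
    have hfibbound : ∀ s : Fin n → F,
        (Z.filter (fun α => Fin.tail α = s)).card ≤ if eval s g = 0 then q else k := by
      intro s
      by_cases hs : eval s g = 0
      · simp only [hs, if_pos]
        calc (Z.filter (fun α => Fin.tail α = s)).card
            ≤ (univ : Finset F).card := by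
              apply Finset.card_le_card_of_injOn (fun α => α 0)
              · intro α _; exact mem_univ _
              · intro a ha b hb hab
                simp only [coe_filter, Set.mem_setOf_eq] at ha hb
                have h3 : Fin.cons (a 0) (Fin.tail a) = Fin.cons (b 0) (Fin.tail b) := by
                  rw [show a 0 = b 0 from hab, ha.2, hb.2]
                rwa [Fin.cons_self_tail, Fin.cons_self_tail] at h3
          _ = q := by simp [hqdef]
      · simp only [hs, if_neg, not_false_iff]
        set u : Polynomial F := p.map (eval s) with hu
        have hu0 : u ≠ 0 := by
          intro h
          apply hs
          have h2 : u.coeff k = 0 := by rw [h]; simp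
          rw [hu, Polynomial.coeff_map] at h2
          rwa [hg, Polynomial.leadingCoeff]
        calc (Z.filter (fun α => Fin.tail α = s)).card
            ≤ u.roots.toFinset.card := by
              apply Finset.card_le_card_of_injOn (fun α => α 0)
              · intro α hα
                simp only [hZ, mem_filter, mem_coe, Multiset.mem_toFinset] at hα ⊢
                obtain ⟨⟨_, h1⟩, h2⟩ := hα
                rw [Polynomial.mem_roots hu0, Polynomial.IsRoot.def, hu, hp, ← h2,
                  ← eval_eq_eval_mv_eval', Fin.cons_self_tail]
                exact h1
              · intro a ha b hb hab
                simp only [coe_filter, Set.mem_setOf_eq] at ha hb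
                have h3 : Fin.cons (a 0) (Fin.tail a) = Fin.cons (b 0) (Fin.tail b) := by
                  rw [show a 0 = b 0 from hab, ha.2, hb.2]
                rwa [Fin.cons_self_tail, Fin.cons_self_tail] at h3
          _ ≤ u.natDegree := by
              refine le_trans (Multiset.toFinset_card_le _) ?_
              exact_mod_cast Polynomial.card_roots' u
          _ ≤ k := Polynomial.natDegree_map_le
    have hsum : Z.card ≤ S.card * q + q ^ n * k := by
      rw [hfib]
      calc ∑ s : Fin n → F, (Z.filter (fun α => Fin.tail α = s)).card
          ≤ ∑ s : Fin n → F, (if eval s g = 0 then q else k) :=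
            Finset.sum_le_sum (fun s _ => hfibbound s)
        _ = S.card * q + (univ.filter (fun s : Fin n → F => ¬ eval s g = 0)).card * k := by
            rw [Finset.sum_ite, Finset.sum_const, Finset.sum_const, smul_eq_mul, smul_eq_mul]
        _ ≤ S.card * q + q ^ n * k := by
            gcongr
            calc (univ.filter (fun s : Fin n → F => ¬ eval s g = 0)).card
                ≤ Fintype.card (Fin n → F) := (card_filter_le _ _).trans (by simp)
              _ = q ^ n := by simp [hqdef]
    calc Z.card * q ≤ (S.card * q + q ^ n * k) * q := by gcongr
      _ = S.card * q * q + q ^ (n + 1) * k := by ring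
      _ ≤ (d - k) * q ^ n * q + q ^ (n + 1) * k := by gcongr
      _ = (d - k) * q ^ (n + 1) + q ^ (n + 1) * k := by ring
      _ = ((d - k) + k) * q ^ (n + 1) := by ring
      _ = d * q ^ (n + 1) := by rw [Nat.sub_add_cancel hkd]

/-- DeMillo-Lipton-Schwartz-Zippel: a nonzero polynomial `f ∈ F_q[x_1,...,x_n]` of total
degree at most `d` has at most `d·q^(n-1)` zeros in `F_q^n`. -/
theorem stmt_2 (n d q : ℕ) (F : Type*) [Field F] [Fintype F] (hq : Fintype.card F = q)
    (f : MvPolynomial (Fin n) F) (hf : f ≠ 0) (hd : f.totalDegree ≤ d) :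
    Nat.card {α : Fin n → F // MvPolynomial.eval α f = 0} ≤ d * q ^ (n - 1) := by
  have key := sz_key F n d f hf hd
  rw [hq] at key
  have hcard : Nat.card {α : Fin n → F // MvPolynomial.eval α f = 0}
      = (univ.filter (fun α : Fin n → F => eval α f = 0)).card := by
    rw [Nat.card_eq_fintype_card, Fintype.card_subtype]
  rw [hcard]
  have hq1 : 1 ≤ q := hq ▸ Fintype.card_pos
  cases n with
  | zero =>
    calc (univ.filter (fun α : Fin 0 → F => eval α f = 0)).card
        ≤ (univ.filter (fun α : Fin 0 → F => eval α f = 0)).card * q :=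
          Nat.le_mul_of_pos_right _ hq1
      _ ≤ d * q ^ 0 := key
      _ = d * q ^ (0 - 1) := by norm_num
  | succ m =>
    have : d * q ^ (m + 1) = d * q ^ m * q := by ring
    rw [this] at key
    have := Nat.le_of_mul_le_mul_right key hq1
    simpa using this
end

section
/- Let A, B, C be pairwise disjoint subsets of [n] with |A| + |B| + |C| = 2s even, and each of |A|, |B|, |C| at most s. Form the 3s × 3s variable matrix M over F_q[x_1,...,x_n] with block structure: the top three blocks of s rows are (I_s | I_s | I_s); below, in the first block of s columns the Vandermonde matrix V_s(x_a : a ∈ A) (rows (1, x_a, ..., x_a^{s-1})), in the second block V_s(x_b : b ∈ B), and in the third V_s(x_c : c ∈ C), with zeros elsewhere. Then det(M) is a nonzero polynomial of degree s(s-1), in which each variable has individual degree at most s-1. -/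
/-!
Expand the determinant over the bijections `τ` from rows to columns. A term survives only if every
top row `i` picks one of the three copies of column `i` and every variable row picks a column of
its own Vandermonde block; it is then `±` the monomial `∏ᵥ x_v ^ (column index of τ v)`. As `A`,
`B`, `C` are disjoint, this monomial records the column index, hence the column, of every variable
row, and the top rows are then forced as well: distinct terms have distinct monomials, so nothing
cancels. A surviving term exists because the index range `[0, s)` can be covered twice by three
intervals of lengths `|A|`, `|B|`, `|C|`, taken cyclically. Every term has degree
`3 (0 + ⋯ + (s-1)) - (0 + ⋯ + (s-1)) = s (s - 1)`, and every exponent is a column index `< s`.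
-/

open MvPolynomial

/-- The 3-wise intersection matrix: top `s` rows `(I_s | I_s | I_s)`, and below a
block-diagonal matrix with Vandermonde blocks `V_s(x_a : a ∈ A)`, `V_s(x_b : b ∈ B)`,
`V_s(x_c : c ∈ C)`, over the polynomial ring `F[x_1,...,x_n]`. -/
noncomputable def M3 (F : Type*) [Field F] (n s : ℕ) (A B C : Finset (Fin n)) :
    Matrix (Fin s ⊕ ({a // a ∈ A} ⊕ {b // b ∈ B} ⊕ {c // c ∈ C}))
      (Fin s ⊕ (Fin s ⊕ Fin s)) (MvPolynomial (Fin n) F) :=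
  fun r c =>
    match r, c with
    | Sum.inl i, Sum.inl j => if i = j then 1 else 0
    | Sum.inl i, Sum.inr (Sum.inl j) => if i = j then 1 else 0
    | Sum.inl i, Sum.inr (Sum.inr j) => if i = j then 1 else 0
    | Sum.inr (Sum.inl a), Sum.inl j => MvPolynomial.X a.1 ^ (j : ℕ)
    | Sum.inr (Sum.inl _), Sum.inr _ => 0
    | Sum.inr (Sum.inr (Sum.inl b)), Sum.inr (Sum.inl j) => MvPolynomial.X b.1 ^ (j : ℕ)
    | Sum.inr (Sum.inr (Sum.inl _)), Sum.inl _ => 0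
    | Sum.inr (Sum.inr (Sum.inl _)), Sum.inr (Sum.inr _) => 0
    | Sum.inr (Sum.inr (Sum.inr c')), Sum.inr (Sum.inr j) => MvPolynomial.X c'.1 ^ (j : ℕ)
    | Sum.inr (Sum.inr (Sum.inr _)), Sum.inl _ => 0
    | Sum.inr (Sum.inr (Sum.inr _)), Sum.inr (Sum.inl _) => 0

open Equiv Finset

section MonomialEntries

variable {m n ι R : Type*} [Fintype m] [Fintype n] [DecidableEq n] [CommRing R]

theorem Matrix.det_submatrix_eq_sum_prod_rows (M : Matrix m n R) (e : n ≃ m) :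
    (M.submatrix e id).det = ∑ σ : Perm n, Perm.sign σ • ∏ r, M r ((σ.trans e).symm r) := by
  rw [Matrix.det_apply]
  refine sum_congr rfl fun σ _ => congrArg _ ?_
  rw [← (σ.trans e).prod_comp]
  simp

variable [DecidableEq m] [DecidableEq ι] (M : Matrix m n (MvPolynomial ι R)) (e : n ≃ m)
  (P : m → n → Prop) [∀ r l, Decidable (P r l)] (d : m → n → ι →₀ ℕ)

theorem MvPolynomial.coeff_det_of_monomial_entries
    (hM : ∀ r l, M r l = if P r l then monomial (d r l) 1 else 0) (μ : ι →₀ ℕ) :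
    coeff μ (M.submatrix e id).det = ∑ σ : Perm n,
      if (∀ r, P r ((σ.trans e).symm r)) ∧ ∑ r, d r ((σ.trans e).symm r) = μ
      then ((Perm.sign σ : ℤ) : R) else 0 := by
  rw [Matrix.det_submatrix_eq_sum_prod_rows, coeff_sum]
  refine sum_congr rfl fun σ _ => ?_
  simp_rw [hM, prod_ite_zero, ← monomial_sum_one]
  rw [Units.smul_def, coeff_smul]
  split_ifs <;> simp_all [coeff_monomial]

theorem MvPolynomial.exists_equiv_of_mem_support_det
    (hM : ∀ r l, M r l = if P r l then monomial (d r l) 1 else 0) {μ : ι →₀ ℕ}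
    (hμ : μ ∈ (M.submatrix e id).det.support) :
    ∃ τ : m ≃ n, (∀ r, P r (τ r)) ∧ ∑ r, d r (τ r) = μ := by
  rw [mem_support_iff, coeff_det_of_monomial_entries M e P d hM] at hμ
  obtain ⟨σ, -, hσ⟩ := exists_ne_zero_of_sum_ne_zero hμ
  exact ⟨_, by_contra fun h => hσ (if_neg h)⟩

theorem MvPolynomial.mem_support_det_of_unique [Nontrivial R]
    (hM : ∀ r l, M r l = if P r l then monomial (d r l) 1 else 0)
    (τ₀ : m ≃ n) (hτ₀ : ∀ r, P r (τ₀ r))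
    (huniq : ∀ τ : m ≃ n, (∀ r, P r (τ r)) → ∑ r, d r (τ r) = ∑ r, d r (τ₀ r) → τ = τ₀) :
    ∑ r, d r (τ₀ r) ∈ (M.submatrix e id).det.support := by
  set σ₀ : Perm n := τ₀.symm.trans e.symm
  have hσ₀ : (σ₀.trans e).symm = τ₀ := by ext; simp [σ₀]
  rw [mem_support_iff, coeff_det_of_monomial_entries M e P d hM, sum_eq_single σ₀]
  · rw [hσ₀, if_pos ⟨hτ₀, rfl⟩]
    rcases Int.units_eq_one_or (Perm.sign σ₀) with h | h <;> simp [h]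
  · intro σ _ hσ
    refine if_neg fun ⟨hP, hd⟩ => hσ ?_
    have h := (huniq _ hP hd).trans hσ₀.symm
    ext l
    simpa using congrArg (fun τ : m ≃ n => e.symm (τ.symm l)) h
  · simp

end MonomialEntries

namespace M3

variable {n s : ℕ} {A B C : Finset (Fin n)}

abbrev Var (A B C : Finset (Fin n)) := {a // a ∈ A} ⊕ {b // b ∈ B} ⊕ {c // c ∈ C}

abbrev Row (s : ℕ) (A B C : Finset (Fin n)) := Fin s ⊕ Var A B C

abbrev Col (s : ℕ) := Fin s ⊕ (Fin s ⊕ Fin s)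

def var : Var A B C → Fin n :=
  Sum.elim Subtype.val (Sum.elim Subtype.val Subtype.val)

theorem var_injective (hAB : Disjoint A B) (hAC : Disjoint A C) (hBC : Disjoint B C) :
    Function.Injective (var : Var A B C → Fin n) := by
  refine Subtype.val_injective.sumElim
    (Subtype.val_injective.sumElim Subtype.val_injective ?_) ?_
  · rintro ⟨b, hb⟩ ⟨c, hc⟩ rfl
    exact disjoint_left.mp hBC hb hc
  · rintro ⟨a, ha⟩ (⟨b, hb⟩ | ⟨c, hc⟩) (rfl : a = _)
    · exact disjoint_left.mp hAB ha hb
    · exact disjoint_left.mp hAC ha hc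

def idx : Col s → Fin s := Sum.elim id (Sum.elim id id)

def blockCol : Var A B C → Fin s → Col s
  | .inl _ => .inl
  | .inr (.inl _) => fun j => .inr (.inl j)
  | .inr (.inr _) => fun j => .inr (.inr j)

@[simp]
theorem idx_blockCol (v : Var A B C) (j : Fin s) : idx (blockCol v j) = j := by
  rcases v with _ | _ | _ <;> rfl

def Admissible : Row s A B C → Col s → Prop
  | .inl i, l => idx l = i
  | .inr v, l => ∃ j, blockCol v j = l

noncomputable def exponent : Row s A B C → Col s → Fin n →₀ ℕ
  | .inl _, _ => 0
  | .inr v, l => Finsupp.single (var v) (idx l)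

open Classical in
theorem apply_eq_ite_monomial (F : Type*) [Field F] (r : Row s A B C) (l : Col s) :
    M3 F n s A B C r l = if Admissible r l then monomial (exponent r l) 1 else 0 := by
  rcases r with i | a | b | c <;> rcases l with j | j | j <;>
    simp [M3, Admissible, exponent, blockCol, idx, var, X_pow_eq_monomial, eq_comm]

noncomputable def weight (τ : Row s A B C → Col s) : Fin n →₀ ℕ := ∑ r, exponent r (τ r)

theorem weight_apply (τ : Row s A B C → Col s) (x : Fin n) :
    weight τ x = ∑ v, if var v = x then (idx (τ (.inr v)) : ℕ) else 0 := by
  simp [weight, Fintype.sum_sum_type, exponent, Finsupp.single_apply]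

theorem weight_apply_var (hvar : Function.Injective (var : Var A B C → Fin n))
    (τ : Row s A B C → Col s) (v : Var A B C) : weight τ (var v) = idx (τ (.inr v)) := by
  simp [weight_apply, hvar.eq_iff]

theorem weight_apply_le (hvar : Function.Injective (var : Var A B C → Fin n))
    (τ : Row s A B C → Col s) (x : Fin n) : weight τ x ≤ s - 1 := by
  by_cases hx : x ∈ Set.range (var : Var A B C → Fin n)
  · obtain ⟨v, rfl⟩ := hx
    have := (idx (τ (.inr v))).isLt
    rw [weight_apply_var hvar]
    omega
  · rw [weight_apply]
    exact (sum_eq_zero fun v _ => if_neg fun h => hx ⟨v, h⟩).trans_le (Nat.zero_le _)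

theorem degree_weight (τ : Row s A B C ≃ Col s) (hτ : ∀ r, Admissible r (τ r)) :
    (weight τ).degree = s * (s - 1) := by
  have htop : ∀ i, (idx (τ (.inl i)) : ℕ) = i := fun i => congrArg Fin.val (hτ (.inl i))
  have hperm : ∑ r, (idx (τ r) : ℕ) = ∑ l, (idx l : ℕ) := τ.sum_comp (fun l => (idx l : ℕ))
  have hcols : ∑ l : Col s, (idx l : ℕ) = 3 * ∑ i : Fin s, (i : ℕ) := by
    simp [Fintype.sum_sum_type, idx]
    ring
  have hgauss : (∑ i : Fin s, (i : ℕ)) * 2 = s * (s - 1) := by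
    rw [Fin.sum_univ_eq_sum_range (fun i => i)]
    exact sum_range_id_mul_two s
  have hdeg : (weight τ).degree = ∑ v, (idx (τ (.inr v)) : ℕ) := by
    simp [weight, Fintype.sum_sum_type, exponent]
  rw [Fintype.sum_sum_type] at hperm
  simp only [htop] at hperm
  omega

theorem eq_of_weight_eq (hvar : Function.Injective (var : Var A B C → Fin n))
    {τ τ' : Row s A B C ≃ Col s} (hτ : ∀ r, Admissible r (τ r)) (hτ' : ∀ r, Admissible r (τ' r))
    (h : weight τ = weight τ') : τ = τ' := by
  have hvarRows : ∀ v, τ (.inr v) = τ' (.inr v) := by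
    intro v
    obtain ⟨j, hj⟩ := hτ (.inr v)
    obtain ⟨j', hj'⟩ := hτ' (.inr v)
    have hidx := weight_apply_var hvar τ v
    rw [h, weight_apply_var hvar, ← hj, ← hj', idx_blockCol, idx_blockCol] at hidx
    rw [← hj, ← hj', Fin.ext hidx]
  ext1 r
  rcases r with i | v
  · by_contra hne
    obtain ⟨r, hr⟩ := τ'.surjective (τ (.inl i))
    rcases r with i' | v
    · have hi : i' = i := (hτ' (.inl i')).symm.trans (hr ▸ hτ (.inl i))
      exact hne (hi ▸ hr).symm
    · exact Sum.inr_ne_inl (τ.injective ((hvarRows v).trans hr))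
  · exact hvarRows v

section Canonical

variable (hsum : #A + #B + #C = 2 * s) (hA : #A ≤ s) (hB : #B ≤ s) (hC : #C ≤ s)

-- `A` takes the indices `[0, |A|)`, `B` the next `|B|` ones cyclically, `[|A|, s) ∪ [0, s - |C|)`,
-- and `C` the remaining `[s - |C|, s)`. Every index is taken by exactly two of the blocks, and
-- `canonical` sends the top row `i` to the copy of column `i` in the third one.
noncomputable def slot : Var A B C → Fin s
  | .inl a => ⟨A.equivFin a, by omega⟩
  | .inr (.inl b) =>
    ⟨if (B.equivFin b : ℕ) < s - #C then B.equivFin b else B.equivFin b + (#A + #C - s),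
      by split_ifs <;> omega⟩
  | .inr (.inr c) => ⟨s - #C + C.equivFin c, by omega⟩

noncomputable def canonical : Row s A B C → Col s
  | .inl i =>
    if (i : ℕ) < s - #C then .inr (.inr i) else if (i : ℕ) < #A then .inr (.inl i) else .inl i
  | .inr v => blockCol v (slot hsum hA hB hC v)

theorem admissible_canonical (r : Row s A B C) : Admissible r (canonical hsum hA hB hC r) := by
  rcases r with i | v
  · simp only [Admissible, canonical]
    split_ifs <;> rfl
  · exact ⟨_, rfl⟩

theorem canonical_surjective : Function.Surjective (canonical hsum hA hB hC) := by
  rintro (j | j | j)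
  · by_cases hjA : (j : ℕ) < #A
    · refine ⟨.inr (.inl (A.equivFin.symm ⟨j, hjA⟩)), ?_⟩
      simp [canonical, slot, blockCol]
    · refine ⟨.inl j, ?_⟩
      simp only [canonical]
      rw [if_neg (by omega), if_neg hjA]
  · by_cases hjC : (j : ℕ) < s - #C
    · refine ⟨.inr (.inr (.inl (B.equivFin.symm ⟨j, by omega⟩))), ?_⟩
      simp [canonical, slot, blockCol, hjC]
    by_cases hjA : (j : ℕ) < #A
    · refine ⟨.inl j, ?_⟩
      simp only [canonical]
      rw [if_neg hjC, if_pos hjA]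
    · refine ⟨.inr (.inr (.inl (B.equivFin.symm ⟨j - (#A + #C - s), by omega⟩))), ?_⟩
      simp only [canonical, slot, blockCol, Equiv.apply_symm_apply, Sum.inr.injEq, Sum.inl.injEq,
        Fin.ext_iff]
      split_ifs <;> omega
  · by_cases hjC : (j : ℕ) < s - #C
    · refine ⟨.inl j, ?_⟩
      simp only [canonical]
      rw [if_pos hjC]
    · refine ⟨.inr (.inr (.inr (C.equivFin.symm ⟨j - (s - #C), by omega⟩))), ?_⟩
      simp only [canonical, slot, blockCol, Equiv.apply_symm_apply, Sum.inr.injEq, Fin.ext_iff]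
      omega

theorem exists_admissible_equiv (hsum : #A + #B + #C = 2 * s) (hA : #A ≤ s) (hB : #B ≤ s)
    (hC : #C ≤ s) : ∃ τ : Row s A B C ≃ Col s, ∀ r, Admissible r (τ r) := by
  have hcard : Fintype.card (Row s A B C) = Fintype.card (Col s) := by
    simp only [Fintype.card_sum, Fintype.card_coe, Fintype.card_fin]
    omega
  exact ⟨.ofBijective _ ((Fintype.bijective_iff_surjective_and_card _).2
    ⟨canonical_surjective hsum hA hB hC, hcard⟩), admissible_canonical hsum hA hB hC⟩

end Canonical

end M3

/-- For pairwise disjoint `A, B, C ⊆ [n]` with `|A|+|B|+|C| = 2s` and each of size at most `s`,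
the determinant of the `3s × 3s` 3-wise intersection matrix is a nonzero polynomial of total
degree `s(s-1)` in which every variable has individual degree at most `s-1`. -/
theorem stmt_3 (F : Type*) [Field F] (n s : ℕ) (A B C : Finset (Fin n))
    (hAB : Disjoint A B) (hAC : Disjoint A C) (hBC : Disjoint B C)
    (hsum : A.card + B.card + C.card = 2 * s)
    (hA : A.card ≤ s) (hB : B.card ≤ s) (hC : C.card ≤ s)
    (e : (Fin s ⊕ (Fin s ⊕ Fin s)) ≃ (Fin s ⊕ ({a // a ∈ A} ⊕ {b // b ∈ B} ⊕ {c // c ∈ C}))) :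
    ((M3 F n s A B C).submatrix e id).det ≠ 0 ∧
    ((M3 F n s A B C).submatrix e id).det.totalDegree = s * (s - 1) ∧
    ∀ i : Fin n, ((M3 F n s A B C).submatrix e id).det.degreeOf i ≤ s - 1 := by
  classical
  set D := ((M3 F n s A B C).submatrix e id).det
  have hvar := M3.var_injective hAB hAC hBC
  have hsupp : ∀ μ ∈ D.support, ∃ τ : M3.Row s A B C ≃ M3.Col s,
      (∀ r, M3.Admissible r (τ r)) ∧ M3.weight τ = μ := fun μ =>
    exists_equiv_of_mem_support_det _ e _ _ (M3.apply_eq_ite_monomial F)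
  obtain ⟨τ₀, hτ₀⟩ := M3.exists_admissible_equiv hsum hA hB hC
  have hτ₀D : M3.weight τ₀ ∈ D.support :=
    mem_support_det_of_unique _ e _ _ (M3.apply_eq_ite_monomial F) τ₀ hτ₀ fun τ hτ hw =>
      M3.eq_of_weight_eq hvar hτ hτ₀ hw
  have hD : D ≠ 0 := fun h => by simp [h] at hτ₀D
  have hhom : D.IsHomogeneous (s * (s - 1)) := fun μ hμ => by
    obtain ⟨τ, hτ, rfl⟩ := hsupp μ (mem_support_iff.2 hμ)
    simpa [Finsupp.degree_eq_weight_one, Pi.one_def] using M3.degree_weight τ hτ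
  refine ⟨hD, hhom.totalDegree hD, fun x => degreeOf_le_iff.2 fun μ hμ => ?_⟩
  obtain ⟨τ, -, rfl⟩ := hsupp μ hμ
  exact M3.weight_apply_le hvar τ x
end

section
/- With the setup of the 3-wise intersection matrix M (pairwise disjoint A, B, C ⊆ [n], |A|+|B|+|C| = 2s, each of size ≤ s): a monomial ∏_{a∈A} x_a^{t_a} ∏_{b∈B} x_b^{t_b} ∏_{c∈C} x_c^{t_c} appears with nonzero coefficient in det(M) if and only if (1) the multiset {t_a : a∈A} ∪ {t_b : b∈B} ∪ {t_c : c∈C} of size 2s contains each integer 0 ≤ i ≤ s-1 exactly twice, and (2) the exponents within each of A, B, C are pairwise distinct. Moreover every nonzero coefficient is ±1. -/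
/-!
In the Leibniz expansion of the determinant every entry is `0` or a monomial with coefficient `1`,
so each nonzero term is `±` a single monomial and is given by a matching of rows with columns.
The lower row of a variable `x` has its nonzero entries in the block of `x`, and `x` occurs in no
other row, so a term with monomial `mon` must put that row in the column (block of `x`, power
`mon x`). Hence `mon` determines the term, and its coefficient is `0` or the sign of that unique
permutation. The matching exists iff no two variables of a block share an exponent, and every
level `i < s` is taken by exactly two variables, leaving exactly one of its three columns for the
top row `i`.
-/

open MvPolynomial

open Finset Equiv

section MonomialEntries

variable {ι σ R : Type*} [Fintype ι] [DecidableEq ι] [CommRing R]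

open Classical in
theorem coeff_det_eq_sum_sign {N : Matrix ι ι (MvPolynomial σ R)} (P : ι → ι → Prop)
    (d : ι → ι → σ →₀ ℕ) (hN : ∀ i j, N i j = if P i j then monomial (d i j) 1 else 0)
    (m : σ →₀ ℕ) :
    coeff m N.det = ∑ τ : Perm ι with (∀ j, P (τ j) j) ∧ ∑ j, d (τ j) j = m,
      ((Perm.sign τ : ℤ) : R) := by
  rw [Matrix.det_apply, coeff_sum, Finset.sum_filter]
  refine Finset.sum_congr rfl fun τ _ => ?_
  have hprod : ∏ j, N (τ j) j =
      if ∀ j, P (τ j) j then monomial (∑ j, d (τ j) j) 1 else 0 := by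
    simp_rw [hN]
    split_ifs with h
    · rw [monomial_sum_one]
      exact Finset.prod_congr rfl fun j _ => if_pos (h j)
    · obtain ⟨j, hj⟩ := not_forall.1 h
      exact Finset.prod_eq_zero (mem_univ j) (if_neg hj)
  rw [Units.smul_def, coeff_smul, hprod]
  split_ifs <;> simp_all [coeff_monomial]

open Classical in
theorem coeff_det_ne_zero_iff_and_eq_zero_or_one_or_neg_one {N : Matrix ι ι (MvPolynomial σ R)} [Nontrivial R]
    (P : ι → ι → Prop) (d : ι → ι → σ →₀ ℕ)
    (hN : ∀ i j, N i j = if P i j then monomial (d i j) 1 else 0) (m : σ →₀ ℕ)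
    (huniq : ∀ τ τ' : Perm ι, (∀ j, P (τ j) j) ∧ ∑ j, d (τ j) j = m →
      (∀ j, P (τ' j) j) ∧ ∑ j, d (τ' j) j = m → τ = τ') :
    (coeff m N.det ≠ 0 ↔ ∃ τ : Perm ι, (∀ j, P (τ j) j) ∧ ∑ j, d (τ j) j = m) ∧
      (coeff m N.det = 0 ∨ coeff m N.det = 1 ∨ coeff m N.det = -1) := by
  rw [coeff_det_eq_sum_sign P d hN]
  by_cases h : ∃ τ : Perm ι, (∀ j, P (τ j) j) ∧ ∑ j, d (τ j) j = m
  · obtain ⟨τ, hτ⟩ := h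
    have hS : ({τ' : Perm ι | (∀ j, P (τ' j) j) ∧ ∑ j, d (τ' j) j = m} : Finset _) = {τ} := by
      ext τ'
      simp only [mem_filter, mem_univ, true_and, mem_singleton]
      exact ⟨fun h' => huniq _ _ h' hτ, fun h' => h' ▸ hτ⟩
    rw [hS, sum_singleton]
    rcases Int.units_eq_one_or (Perm.sign τ) with h1 | h1 <;> simp [h1] <;> exact ⟨τ, hτ⟩
  · rw [Finset.sum_eq_zero fun τ hτ => absurd ⟨τ, (mem_filter.1 hτ).2⟩ h]
    simp [h]

end MonomialEntries

theorem Finsupp.univ_sum_single_eq_iff {L σ M : Type*} [Fintype L] [AddCommMonoid M]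
    {var : L → σ} (hvar : Function.Injective var) {m : σ →₀ M}
    (hm : ∀ x, x ∉ Set.range var → m x = 0) (f : L → M) :
    ∑ l, Finsupp.single (var l) (f l) = m ↔ ∀ l, f l = m (var l) := by
  classical
  have heval : ∀ l, (∑ l', Finsupp.single (var l') (f l')) (var l) = f l := by
    intro l
    simp [Finsupp.finsetSum_apply, Finsupp.single_apply, hvar.eq_iff]
  refine ⟨fun h l => by rw [← h, heval], fun h => Finsupp.ext fun x => ?_⟩
  by_cases hx : x ∈ Set.range var
  · obtain ⟨l, rfl⟩ := hx
    rw [heval, h]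
  · rw [hm x hx, Finsupp.finsetSum_apply]
    exact Finset.sum_eq_zero fun l _ => Finsupp.single_eq_of_ne (fun hl => hx ⟨l, hl.symm⟩)

section IntersectionPattern

variable {κ L σ : Type*} (blk : L → κ) (var : L → σ) {s : ℕ}

def blockSupport : Fin s ⊕ L → κ × Fin s → Prop
  | .inl i, c => c.2 = i
  | .inr l, c => c.1 = blk l

noncomputable def blockExponent : Fin s ⊕ L → κ × Fin s → σ →₀ ℕ
  | .inl _, _ => 0
  | .inr l, c => Finsupp.single (var l) c.2

open Classical in
/-- Row `inl i` is the `i`-th row of `(I_s | ⋯ | I_s)`; row `inr l` is the Vandermonde row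
`(1, x, …, x^(s-1))` of `x = var l`, placed in block `blk l`. For three blocks this is `M3`
(`M3_eq_submatrix`). -/
noncomputable def intersectionMatrix (R : Type*) [CommSemiring R] (blk : L → κ) (var : L → σ)
    (s : ℕ) : Matrix (Fin s ⊕ L) (κ × Fin s) (MvPolynomial σ R) :=
  fun r c => if blockSupport blk r c then monomial (blockExponent var r c) 1 else 0

/-- `g` sends each row to the column of its factor in a term of the determinant of
`intersectionMatrix` whose monomial is `m`. -/
def RealizesMonomial (m : σ →₀ ℕ) (g : Fin s ⊕ L ≃ κ × Fin s) : Prop :=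
  (∀ i, (g (.inl i)).2 = i) ∧ ∀ l, (g (.inr l)).1 = blk l ∧ ((g (.inr l)).2 : ℕ) = m (var l)

variable {blk var}

theorem realizesMonomial_iff [Fintype L] (hvar : Function.Injective var) {m : σ →₀ ℕ}
    (hm : ∀ x, x ∉ Set.range var → m x = 0) (g : Fin s ⊕ L ≃ κ × Fin s) :
    RealizesMonomial blk var m g ↔
      (∀ r, blockSupport blk r (g r)) ∧ ∑ r, blockExponent var r (g r) = m := by
  have hexp : ∑ r, blockExponent var r (g r) =
      ∑ l, Finsupp.single (var l) ((g (.inr l)).2 : ℕ) := by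
    simp [Fintype.sum_sum_type, blockExponent]
  rw [hexp, Finsupp.univ_sum_single_eq_iff hvar hm, RealizesMonomial]
  simp only [Sum.forall, blockSupport, forall_and]
  tauto

theorem RealizesMonomial.unique {m : σ →₀ ℕ} {g g' : Fin s ⊕ L ≃ κ × Fin s}
    (hg : RealizesMonomial blk var m g) (hg' : RealizesMonomial blk var m g') : g = g' := by
  have hinr : ∀ l, g (.inr l) = g' (.inr l) := fun l =>
    Prod.ext ((hg.2 l).1.trans (hg'.2 l).1.symm) (Fin.ext ((hg.2 l).2.trans (hg'.2 l).2.symm))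
  refine Equiv.ext fun r => ?_
  rcases r with i | l
  · obtain ⟨i' | l, hr⟩ := g.surjective (g' (.inl i))
    · have hi : i' = i := by simpa only [hg.1, hg'.1] using congrArg Prod.snd hr
      rw [← hi, hr, hi]
    · exact absurd (g'.injective ((hinr l).symm.trans hr)) Sum.inr_ne_inl
  · exact hinr l

theorem RealizesMonomial.injective {m : σ →₀ ℕ} {g : Fin s ⊕ L ≃ κ × Fin s}
    (hg : RealizesMonomial blk var m g) : Function.Injective fun l => (blk l, m (var l)) := by
  intro l l' h
  have : g (.inr l) = g (.inr l') :=
    Prod.ext ((hg.2 l).1.trans ((congrArg Prod.fst h).trans (hg.2 l').1.symm))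
      (Fin.ext ((hg.2 l).2.trans ((congrArg Prod.snd h).trans (hg.2 l').2.symm)))
  exact Sum.inr_injective (g.injective this)

theorem RealizesMonomial.card_level_add_one [Fintype κ] [Fintype L] {m : σ →₀ ℕ}
    {g : Fin s ⊕ L ≃ κ × Fin s} (hg : RealizesMonomial blk var m g) (i : Fin s) :
    #{l | m (var l) = i} + 1 = Fintype.card κ := by
  have hlevel : #{r | (g r).2 = i} = #{c : κ × Fin s | c.2 = i} :=
    card_equiv g (by simp)
  rw [card_filter, card_filter, Fintype.sum_sum_type, Fintype.sum_prod_type] at hlevel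
  have hinr : ∀ l, (g (.inr l)).2 = i ↔ m (var l) = i := fun l => by
    rw [Fin.ext_iff, (hg.2 l).2]
  rw [add_comm]
  simpa [hg.1, hinr, ← card_filter, filter_eq'] using hlevel

theorem exists_realizesMonomial [Fintype κ] [Fintype L]
    (hcard : Fintype.card (Fin s ⊕ L) = Fintype.card (κ × Fin s)) {m : σ →₀ ℕ}
    (hinj : Function.Injective fun l => (blk l, m (var l)))
    (hcount : ∀ i < s, #{l | m (var l) = i} + 1 = Fintype.card κ) :
    ∃ g : Fin s ⊕ L ≃ κ × Fin s, RealizesMonomial blk var m g := by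
  classical
  simp only [Fintype.card_sum, Fintype.card_prod, Fintype.card_fin] at hcard
  have hlt : ∀ l, m (var l) < s := by
    have hfib : #{l | m (var l) < s} = ∑ i ∈ range s, #{l | m (var l) = i} := by
      rw [card_eq_sum_card_fiberwise (f := fun l => m (var l)) (t := range s)
        (fun l hl => by simpa using hl)]
      refine sum_congr rfl fun i hi => congrArg card (ext fun l => ?_)
      simp only [mem_filter, mem_univ, true_and, and_iff_right_iff_imp]
      rintro rfl
      simpa using hi
    have hall : #{l | m (var l) < s} = #(univ : Finset L) := by
      rw [hfib, sum_congr rfl fun i hi => (Nat.eq_sub_of_add_eq (hcount i (mem_range.1 hi))),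
        sum_const, card_range, card_univ, smul_eq_mul, Nat.mul_sub_one, mul_comm]
      omega
    simpa using filter_card_eq hall
  have hfree : ∀ i : Fin s, ∃ k, ∀ l, m (var l) = i → blk l ≠ k := by
    intro i
    have : #(image blk {l | m (var l) = i}) < #(univ : Finset κ) := by
      have hi := hcount i i.2
      have himage := card_image_le (f := blk) (s := ({l | m (var l) = i} : Finset L))
      rw [card_univ]
      omega
    obtain ⟨k, -, hk⟩ := exists_mem_notMem_of_card_lt_card this
    exact ⟨k, fun l hl hlk => hk (mem_image.2 ⟨l, by simpa using hl, hlk⟩)⟩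
  choose k hk using hfree
  let toCol : Fin s ⊕ L → κ × Fin s :=
    Sum.elim (fun i => (k i, i)) (fun l => (blk l, ⟨m (var l), hlt l⟩))
  have htoCol : Function.Injective toCol := by
    rintro (i | l) (i' | l') heq <;>
      simp only [toCol, Sum.elim_inl, Sum.elim_inr, Prod.mk.injEq] at heq
    · exact congrArg Sum.inl heq.2
    · exact absurd heq.1 (hk i l' (congrArg Fin.val heq.2).symm).symm
    · exact absurd heq.1 (hk i' l (congrArg Fin.val heq.2))
    · exact congrArg Sum.inr (hinj (Prod.ext heq.1 (congrArg Fin.val heq.2)))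
  have hbij : Function.Bijective toCol :=
    (Fintype.bijective_iff_injective_and_card toCol).2 ⟨htoCol, by simp [hcard]⟩
  exact ⟨Equiv.ofBijective toCol hbij, fun i => rfl, fun l => ⟨rfl, rfl⟩⟩

theorem coeff_det_intersectionMatrix_submatrix {R Q : Type*} [CommRing R] [Nontrivial R]
    [Fintype κ] [Fintype L] [Fintype Q] [DecidableEq Q] (e : Q ≃ Fin s ⊕ L) (ψ : Q ≃ κ × Fin s)
    (hvar : Function.Injective var) {m : σ →₀ ℕ} (hm : ∀ x, x ∉ Set.range var → m x = 0) :
    (coeff m ((intersectionMatrix R blk var s).submatrix e ψ).det ≠ 0 ↔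
      (Function.Injective fun l => (blk l, m (var l))) ∧
        ∀ i < s, #{l | m (var l) = i} + 1 = Fintype.card κ) ∧
    (coeff m ((intersectionMatrix R blk var s).submatrix e ψ).det = 0 ∨
      coeff m ((intersectionMatrix R blk var s).submatrix e ψ).det = 1 ∨
      coeff m ((intersectionMatrix R blk var s).submatrix e ψ).det = -1) := by
  classical
  let toBij : Perm Q → (Fin s ⊕ L ≃ κ × Fin s) := fun τ => (e.symm.trans τ.symm).trans ψ
  have hadm : ∀ τ : Perm Q, ((∀ q, blockSupport blk (e (τ q)) (ψ q)) ∧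
      ∑ q, blockExponent var (e (τ q)) (ψ q) = m) ↔ RealizesMonomial blk var m (toBij τ) := by
    intro τ
    have hτ : ∀ q, toBij τ ((τ.trans e) q) = ψ q := by simp [toBij]
    rw [realizesMonomial_iff hvar hm, ← (τ.trans e).forall_congr_right,
      ← (τ.trans e).sum_comp]
    simp only [hτ]
    rfl
  have huniq : ∀ τ τ' : Perm Q, _ → _ → τ = τ' := fun τ τ' hτ hτ' => by
    have h := ((hadm τ).1 hτ).unique ((hadm τ').1 hτ')
    have : τ.symm = τ'.symm := Equiv.ext fun q => by
      simpa [toBij] using congrArg ψ.symm (Equiv.congr_fun h (e q))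
    exact Equiv.symm_bijective.injective this
  obtain ⟨hne, hpm⟩ := coeff_det_ne_zero_iff_and_eq_zero_or_one_or_neg_one
    (N := (intersectionMatrix R blk var s).submatrix e ψ)
    (fun q' q => blockSupport blk (e q') (ψ q)) (fun q' q => blockExponent var (e q') (ψ q))
    (fun _ _ => rfl) m huniq
  refine ⟨hne.trans ⟨fun ⟨τ, hτ⟩ => ?_, fun ⟨hinj, hcount⟩ => ?_⟩, hpm⟩
  · have hg := (hadm τ).1 hτ
    exact ⟨hg.injective, fun i hi => hg.card_level_add_one ⟨i, hi⟩⟩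
  · obtain ⟨g, hg⟩ := exists_realizesMonomial (Fintype.card_congr (e.symm.trans ψ)) hinj hcount
    refine ⟨(e.trans (g.trans ψ.symm)).symm, (hadm _).2 ?_⟩
    convert hg
    ext r <;> simp [toBij]

end IntersectionPattern

section ThreeBlocks

variable {α : Type*} {A B C : Finset α}

def sumIndex : A ⊕ B ⊕ C → Fin 3 :=
  Sum.elim (fun _ => 0) (Sum.elim (fun _ => 1) (fun _ => 2))

def sumVal : A ⊕ B ⊕ C → α :=
  Sum.elim Subtype.val (Sum.elim Subtype.val Subtype.val)

theorem sumVal_injective (hAB : Disjoint A B) (hAC : Disjoint A C) (hBC : Disjoint B C) :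
    Function.Injective (sumVal : A ⊕ B ⊕ C → α) := by
  have hne : ∀ {X Y : Finset α}, Disjoint X Y → ∀ (x : X) (y : Y), (x : α) ≠ y :=
    fun hXY x y h => Finset.disjoint_left.1 hXY x.2 (h ▸ y.2)
  rintro (a | b | c) (a' | b' | c') h <;> simp only [sumVal, Sum.elim_inl, Sum.elim_inr] at h
  · rw [Subtype.ext h]
  · exact absurd h (hne hAB a b')
  · exact absurd h (hne hAC a c')
  · exact absurd h.symm (hne hAB a' b)
  · rw [Subtype.ext h]
  · exact absurd h (hne hBC b c')
  · exact absurd h.symm (hne hAC a' c)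
  · exact absurd h.symm (hne hBC b' c)
  · rw [Subtype.ext h]

def blockColumnEquiv (s : ℕ) : Fin s ⊕ Fin s ⊕ Fin s ≃ Fin 3 × Fin s where
  toFun := Sum.elim (Prod.mk 0) (Sum.elim (Prod.mk 1) (Prod.mk 2))
  invFun c := ![Sum.inl, Sum.inr ∘ Sum.inl, Sum.inr ∘ Sum.inr] c.1 c.2
  left_inv := by rintro (j | j | j) <;> rfl
  right_inv := by rintro ⟨k, j⟩; fin_cases k <;> rfl

theorem M3_eq_submatrix (F : Type*) [Field F] (n s : ℕ) (A B C : Finset (Fin n)) :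
    M3 F n s A B C =
      (intersectionMatrix F sumIndex sumVal s).submatrix id (blockColumnEquiv s) := by
  ext (i | a | b | c) (j | j | j) <;>
    simp [M3, intersectionMatrix, blockSupport, blockExponent, blockColumnEquiv, sumIndex, sumVal,
      X_pow_eq_monomial, eq_comm]

theorem range_sumVal [DecidableEq α] :
    Set.range (sumVal : A ⊕ B ⊕ C → α) = ↑(A ∪ B ∪ C) := by
  ext x
  simp [sumVal]

theorem card_filter_sumVal [DecidableEq α] (hAB : Disjoint A B) (hAC : Disjoint A C)
    (hBC : Disjoint B C) (p : α → Prop) [DecidablePred p] :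
    #{l : A ⊕ B ⊕ C | p (sumVal l)} = #({x ∈ A ∪ B ∪ C | p x}) := by
  have huniv : univ.map ⟨sumVal, sumVal_injective hAB hAC hBC⟩ = A ∪ B ∪ C := by
    rw [← coe_inj, coe_map, coe_univ, Set.image_univ]
    exact range_sumVal
  rw [← huniv, filter_map, card_map]
  rfl

theorem injective_sumIndex_sumVal_iff_injOn {β : Type*} (f : α → β) :
    (Function.Injective fun l : A ⊕ B ⊕ C => (sumIndex l, f (sumVal l))) ↔
      Set.InjOn f A ∧ Set.InjOn f B ∧ Set.InjOn f C := by
  simp [Function.Injective, Sum.forall, sumIndex, sumVal, Set.InjOn, Subtype.ext_iff]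

end ThreeBlocks

theorem stmt_4_general (F : Type*) [Field F] (n s : ℕ) (A B C : Finset (Fin n))
    (hAB : Disjoint A B) (hAC : Disjoint A C) (hBC : Disjoint B C)
    (e : (Fin s ⊕ (Fin s ⊕ Fin s)) ≃ (Fin s ⊕ ({a // a ∈ A} ⊕ {b // b ∈ B} ⊕ {c // c ∈ C})))
    (mon : Fin n →₀ ℕ) (hmon : ∀ x, x ∉ A ∪ B ∪ C → mon x = 0) :
    (MvPolynomial.coeff mon ((M3 F n s A B C).submatrix e id).det ≠ 0 ↔
      ((∀ i < s, ((A ∪ B ∪ C).filter fun x => mon x = i).card = 2) ∧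
        Set.InjOn mon ↑A ∧ Set.InjOn mon ↑B ∧ Set.InjOn mon ↑C)) ∧
    (MvPolynomial.coeff mon ((M3 F n s A B C).submatrix e id).det = 0 ∨
      MvPolynomial.coeff mon ((M3 F n s A B C).submatrix e id).det = 1 ∨
      MvPolynomial.coeff mon ((M3 F n s A B C).submatrix e id).det = -1) := by
  have hm : ∀ x, x ∉ Set.range sumVal → mon x = 0 := fun x hx =>
    hmon x (by rwa [range_sumVal, Finset.mem_coe] at hx)
  rw [M3_eq_submatrix, Matrix.submatrix_submatrix]
  obtain ⟨hne, hpm⟩ := coeff_det_intersectionMatrix_submatrix (R := F) e (blockColumnEquiv s)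
    (sumVal_injective hAB hAC hBC) hm
  refine ⟨hne.trans ?_, hpm⟩
  simp only [injective_sumIndex_sumVal_iff_injOn, Fintype.card_fin, Nat.reduceEqDiff, and_comm]
  refine and_congr_right' (forall₂_congr fun i _ => ?_)
  rw [card_filter_sumVal hAB hAC hBC (mon · = i)]

/-- Characterization of the monomials of the determinant of the 3-wise intersection matrix:
a monomial supported on `A ∪ B ∪ C` appears with nonzero coefficient iff its multiset of
exponents contains each integer `0 ≤ i ≤ s-1` exactly twice and the exponents within each of
`A`, `B`, `C` are pairwise distinct; moreover every nonzero coefficient is `±1`. -/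
theorem stmt_4 (F : Type*) [Field F] (n s : ℕ) (A B C : Finset (Fin n))
    (hAB : Disjoint A B) (hAC : Disjoint A C) (hBC : Disjoint B C)
    (hsum : A.card + B.card + C.card = 2 * s)
    (hA : A.card ≤ s) (hB : B.card ≤ s) (hC : C.card ≤ s)
    (e : (Fin s ⊕ (Fin s ⊕ Fin s)) ≃ (Fin s ⊕ ({a // a ∈ A} ⊕ {b // b ∈ B} ⊕ {c // c ∈ C})))
    (mon : Fin n →₀ ℕ) (hmon : ∀ x, x ∉ A ∪ B ∪ C → mon x = 0) :
    (MvPolynomial.coeff mon ((M3 F n s A B C).submatrix e id).det ≠ 0 ↔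
      ((∀ i < s, ((A ∪ B ∪ C).filter fun x => mon x = i).card = 2) ∧
        Set.InjOn mon ↑A ∧ Set.InjOn mon ↑B ∧ Set.InjOn mon ↑C)) ∧
    (MvPolynomial.coeff mon ((M3 F n s A B C).submatrix e id).det = 0 ∨
      MvPolynomial.coeff mon ((M3 F n s A B C).submatrix e id).det = 1 ∨
      MvPolynomial.coeff mon ((M3 F n s A B C).submatrix e id).det = -1) :=
  stmt_4_general F n s A B C hAB hAC hBC e mon hmon
end

section
/- Let C be an [n,k]-RS code over F_q with evaluation vector α = (α_1,...,α_n) (distinct elements). If C is not ((2/3)(1-k/n), 2) list-decodable, then there exist pairwise disjoint subsets I_1∩I_2, I_1∩I_3, I_2∩I_3 arising from a triple (I_1, I_2, I_3) of subsets of [n] with I_1∩I_2∩I_3 = ∅, sum of pairwise intersection sizes equal to 2s for some s ≤ k, each pairwise intersection of size ≤ s, such that det(M_{s,(I_1,I_2,I_3)})(α) = 0, where M_{s,(I_1,I_2,I_3)} is the 3-wise intersection matrix. -/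
open MvPolynomial

/-- The `[n,k]`-RS code defined by the evaluation vector `α`. -/
def RScode (F : Type*) [Field F] (n k : ℕ) (α : Fin n → F) : Set (Fin n → F) :=
  {c | ∃ f : Polynomial F, f.degree < (k : WithBot ℕ) ∧ c = fun i => f.eval (α i)}

/-- `C` is `(r, L)` list-decodable: every Hamming ball of radius `r·n` contains at most `L`
codewords of `C`. -/
def listDecodable {n : ℕ} {Q : Type*} [DecidableEq Q] (C : Set (Fin n → Q)) (r : ℝ)
    (L : ℕ) : Prop :=
  ∀ y : Fin n → Q, Nat.card {c : Fin n → Q // c ∈ C ∧ (hammingDist y c : ℝ) ≤ r * n} ≤ L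

section Aux

variable {F : Type*} [Field F] {n : ℕ}

lemma card_le_natDegree' {α : Fin n → F} (hα : Function.Injective α)
    {p : Polynomial F} (hp : p ≠ 0) {S : Finset (Fin n)}
    (hS : ∀ i ∈ S, p.eval (α i) = 0) : S.card ≤ p.natDegree := by
  classical
  have h2 : S.image α ⊆ p.roots.toFinset := by
    intro x hx
    obtain ⟨i, hi, rfl⟩ := Finset.mem_image.mp hx
    simp only [Multiset.mem_toFinset, Polynomial.mem_roots hp]
    exact hS i hi
  calc S.card = (S.image α).card := (Finset.card_image_of_injective S hα).symm
    _ ≤ p.roots.toFinset.card := Finset.card_le_card h2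
    _ ≤ Multiset.card p.roots := p.roots.toFinset_card_le
    _ ≤ p.natDegree := p.card_roots'

lemma prod_dvd' {α : Fin n → F} (hα : Function.Injective α)
    (T : Finset (Fin n)) :
    ∀ p : Polynomial F, (∀ i ∈ T, p.eval (α i) = 0) →
      (∏ i ∈ T, (Polynomial.X - Polynomial.C (α i))) ∣ p := by
  classical
  induction T using Finset.induction with
  | empty => simp
  | @insert a T' ha ih =>
    intro p hp
    obtain ⟨q, hq⟩ := Polynomial.dvd_iff_isRoot.mpr (hp a (Finset.mem_insert_self a T'))
    have hq' : ∀ i ∈ T', q.eval (α i) = 0 := by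
      intro i hi
      have h0 := hp i (Finset.mem_insert_of_mem hi)
      rw [hq, Polynomial.eval_mul, Polynomial.eval_sub, Polynomial.eval_X,
        Polynomial.eval_C] at h0
      have hne : α i - α a ≠ 0 := sub_ne_zero.mpr (hα.ne (by rintro rfl; exact ha hi))
      exact (mul_eq_zero.mp h0).resolve_left hne
    rw [Finset.prod_insert ha, hq]
    exact mul_dvd_mul_left _ (ih q hq')

set_option maxHeartbeats 1000000 in
lemma indicator_le' (p1 p2 p3 q12 q13 q23 : Prop) [Decidable p1] [Decidable p2] [Decidable p3]
    [Decidable q12] [Decidable q13] [Decidable q23]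
    (h12 : p1 → p2 → q12) (h13 : p1 → p3 → q13) (h23 : p2 → p3 → q23) :
    ((if p1 then 1 else 0) + (if p2 then 1 else 0) + (if p3 then 1 else 0) : ℕ) ≤
      1 + ((if q12 ∧ ¬(q12 ∧ q13) then 1 else 0) +
        ((if q13 ∧ ¬(q12 ∧ q13) then 1 else 0) + (if q23 ∧ ¬(q12 ∧ q13) then 1 else 0))) +
      2 * (if q12 ∧ q13 then 1 else 0) := by
  by_cases hp1 : p1 <;> by_cases hp2 : p2 <;> by_cases hp3 : p3 <;>
    simp only [hp1, hp2, hp3, if_true, if_false, forall_true_left, true_implies] at * <;>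
    split_ifs <;> first | omega | tauto

end Aux

/-- If an `[n,k]`-RS code is not `((2/3)(1-k/n), 2)` list-decodable, then there are subsets
`I₁, I₂, I₃ ⊆ [n]` with empty triple intersection, pairwise intersections of sizes summing
to `2s` for some `s ≤ k`, each of size at most `s`, such that the determinant of the 3-wise
intersection matrix `M_{s,(I₁,I₂,I₃)}` vanishes at `α`. -/
theorem stmt_5 (F : Type*) [Field F] [Fintype F] [DecidableEq F] (n k : ℕ)
    (hk : 0 < k) (hkn : k ≤ n) (α : Fin n → F) (hα : Function.Injective α)
    (h : ¬ listDecodable (RScode F n k α) ((2 / 3) * (1 - (k : ℝ) / n)) 2) :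
    ∃ (s : ℕ) (I1 I2 I3 : Finset (Fin n)), s ≤ k ∧ I1 ∩ I2 ∩ I3 = ∅ ∧
      (I1 ∩ I2).card + (I1 ∩ I3).card + (I2 ∩ I3).card = 2 * s ∧
      (I1 ∩ I2).card ≤ s ∧ (I1 ∩ I3).card ≤ s ∧ (I2 ∩ I3).card ≤ s ∧
      ∀ e : (Fin s ⊕ (Fin s ⊕ Fin s)) ≃
          (Fin s ⊕ ({a // a ∈ I1 ∩ I2} ⊕ {b // b ∈ I1 ∩ I3} ⊕ {c // c ∈ I2 ∩ I3})),
        MvPolynomial.eval α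
          (((M3 F n s (I1 ∩ I2) (I1 ∩ I3) (I2 ∩ I3)).submatrix e id).det) = 0 := by
  classical
  unfold listDecodable at h
  push_neg at h
  obtain ⟨y, hy⟩ := h
  haveI : Fintype {c : Fin n → F // c ∈ RScode F n k α ∧
      (hammingDist y c : ℝ) ≤ 2 / 3 * (1 - (k : ℝ) / n) * n} := Fintype.ofFinite _
  rw [Nat.card_eq_fintype_card] at hy
  obtain ⟨c1, c2, c3, hne12, hne13, hne23⟩ := Fintype.two_lt_card_iff.mp hy
  obtain ⟨f1, hdeg1, hc1⟩ := c1.2.1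
  obtain ⟨f2, hdeg2, hc2⟩ := c2.2.1
  obtain ⟨f3, hdeg3, hc3⟩ := c3.2.1
  have hn : 0 < n := lt_of_lt_of_le hk hkn
  -- distance bounds
  have key : ∀ d : ℕ, (d : ℝ) ≤ 2 / 3 * (1 - (k : ℝ) / n) * n → 3 * d ≤ 2 * (n - k) := by
    intro d hd
    have hn' : (0:ℝ) < n := by exact_mod_cast hn
    have heq : (2:ℝ) / 3 * (1 - (k : ℝ) / n) * n = 2 * ((n:ℝ) - k) / 3 := by
      field_simp
    rw [heq] at hd
    have h3 : ((3 * d : ℕ) : ℝ) ≤ ((2 * (n - k) : ℕ) : ℝ) := by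
      push_cast [Nat.cast_sub hkn]
      linarith
    exact_mod_cast h3
  have hd1 : 3 * hammingDist y c1.1 ≤ 2 * (n - k) := key _ c1.2.2
  have hd2 : 3 * hammingDist y c2.1 ≤ 2 * (n - k) := key _ c2.2.2
  have hd3 : 3 * hammingDist y c3.1 ≤ 2 * (n - k) := key _ c3.2.2
  -- agreement sets
  set I1 : Finset (Fin n) := Finset.univ.filter (fun x => y x = f1.eval (α x)) with hI1def
  set I2 : Finset (Fin n) := Finset.univ.filter (fun x => y x = f2.eval (α x)) with hI2def
  set I3 : Finset (Fin n) := Finset.univ.filter (fun x => y x = f3.eval (α x)) with hI3def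
  have hI1 : I1.card + hammingDist y c1.1 = n := by
    rw [hc1]
    rw [show hammingDist y (fun i => f1.eval (α i))
      = (Finset.univ.filter fun i => ¬ (y i = f1.eval (α i))).card from rfl]
    simpa using Finset.card_filter_add_card_filter_not
      (s := (Finset.univ : Finset (Fin n))) (fun x => y x = f1.eval (α x))
  have hI2 : I2.card + hammingDist y c2.1 = n := by
    rw [hc2]
    rw [show hammingDist y (fun i => f2.eval (α i))
      = (Finset.univ.filter fun i => ¬ (y i = f2.eval (α i))).card from rfl]
    simpa using Finset.card_filter_add_card_filter_not
      (s := (Finset.univ : Finset (Fin n))) (fun x => y x = f2.eval (α x))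
  have hI3 : I3.card + hammingDist y c3.1 = n := by
    rw [hc3]
    rw [show hammingDist y (fun i => f3.eval (α i))
      = (Finset.univ.filter fun i => ¬ (y i = f3.eval (α i))).card from rfl]
    simpa using Finset.card_filter_add_card_filter_not
      (s := (Finset.univ : Finset (Fin n))) (fun x => y x = f3.eval (α x))
  have hIsum : n + 2 * k ≤ I1.card + I2.card + I3.card := by omega
  -- the triple agreement set and reduced pairwise agreement sets
  set T : Finset (Fin n) := Finset.univ.filter
    (fun x => f1.eval (α x) = f2.eval (α x) ∧ f1.eval (α x) = f3.eval (α x)) with hTdef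
  set A0 : Finset (Fin n) := Finset.univ.filter
    (fun x => f1.eval (α x) = f2.eval (α x) ∧
      ¬(f1.eval (α x) = f2.eval (α x) ∧ f1.eval (α x) = f3.eval (α x))) with hA0def
  set B0 : Finset (Fin n) := Finset.univ.filter
    (fun x => f1.eval (α x) = f3.eval (α x) ∧
      ¬(f1.eval (α x) = f2.eval (α x) ∧ f1.eval (α x) = f3.eval (α x))) with hB0def
  set C0 : Finset (Fin n) := Finset.univ.filter
    (fun x => f2.eval (α x) = f3.eval (α x) ∧
      ¬(f1.eval (α x) = f2.eval (α x) ∧ f1.eval (α x) = f3.eval (α x))) with hC0def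
  have hcount : I1.card + I2.card + I3.card ≤
      n + (A0.card + (B0.card + C0.card)) + 2 * T.card := by
    have hpt : ∀ x : Fin n,
        ((if y x = f1.eval (α x) then 1 else 0) + (if y x = f2.eval (α x) then 1 else 0)
          + (if y x = f3.eval (α x) then 1 else 0) : ℕ) ≤
        1 + ((if f1.eval (α x) = f2.eval (α x) ∧
            ¬(f1.eval (α x) = f2.eval (α x) ∧ f1.eval (α x) = f3.eval (α x)) then 1 else 0) +
          ((if f1.eval (α x) = f3.eval (α x) ∧
            ¬(f1.eval (α x) = f2.eval (α x) ∧ f1.eval (α x) = f3.eval (α x)) then 1 else 0) +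
          (if f2.eval (α x) = f3.eval (α x) ∧
            ¬(f1.eval (α x) = f2.eval (α x) ∧ f1.eval (α x) = f3.eval (α x)) then 1 else 0))) +
        2 * (if f1.eval (α x) = f2.eval (α x) ∧ f1.eval (α x) = f3.eval (α x) then 1 else 0) :=
      fun x => indicator_le' _ _ _ _ _ _
        (fun a b => a.symm.trans b) (fun a b => a.symm.trans b) (fun a b => a.symm.trans b)
    calc I1.card + I2.card + I3.card
        = ∑ x : Fin n, ((if y x = f1.eval (α x) then 1 else 0)
            + (if y x = f2.eval (α x) then 1 else 0)
            + (if y x = f3.eval (α x) then 1 else 0) : ℕ) := by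
          simp only [hI1def, hI2def, hI3def, Finset.card_filter, ← Finset.sum_add_distrib]
      _ ≤ ∑ x : Fin n, (1 + ((if f1.eval (α x) = f2.eval (α x) ∧
            ¬(f1.eval (α x) = f2.eval (α x) ∧ f1.eval (α x) = f3.eval (α x)) then 1 else 0) +
          ((if f1.eval (α x) = f3.eval (α x) ∧
            ¬(f1.eval (α x) = f2.eval (α x) ∧ f1.eval (α x) = f3.eval (α x)) then 1 else 0) +
          (if f2.eval (α x) = f3.eval (α x) ∧
            ¬(f1.eval (α x) = f2.eval (α x) ∧ f1.eval (α x) = f3.eval (α x)) then 1 else 0))) +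
          2 * (if f1.eval (α x) = f2.eval (α x) ∧ f1.eval (α x) = f3.eval (α x) then 1 else 0)) :=
          Finset.sum_le_sum (fun x _ => hpt x)
      _ = n + (A0.card + (B0.card + C0.card)) + 2 * T.card := by
          simp only [hA0def, hB0def, hC0def, hTdef, Finset.card_filter,
            Finset.sum_add_distrib, ← Finset.mul_sum, Finset.sum_const, Finset.card_univ,
            Fintype.card_fin, smul_eq_mul, mul_one]
  -- difference polynomials
  set u1 : Polynomial F := f1 - f2 with hu1def
  set u2 : Polynomial F := f3 - f1 with hu2def
  set u3 : Polynomial F := f2 - f3 with hu3def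
  have hu1 : u1 ≠ 0 := by
    intro h0
    exact hne12 (Subtype.ext (by rw [hc1, hc2, sub_eq_zero.mp h0]))
  have hu2 : u2 ≠ 0 := by
    intro h0
    exact hne13 (Subtype.ext (by rw [hc1, hc3, sub_eq_zero.mp h0]))
  have hu3 : u3 ≠ 0 := by
    intro h0
    exact hne23 (Subtype.ext (by rw [hc2, hc3, sub_eq_zero.mp h0]))
  have hu1deg : u1.natDegree < k := (Polynomial.natDegree_lt_iff_degree_lt hu1).mpr
    (lt_of_le_of_lt (Polynomial.degree_sub_le _ _) (max_lt hdeg1 hdeg2))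
  have hu2deg : u2.natDegree < k := (Polynomial.natDegree_lt_iff_degree_lt hu2).mpr
    (lt_of_le_of_lt (Polynomial.degree_sub_le _ _) (max_lt hdeg3 hdeg1))
  have hu3deg : u3.natDegree < k := (Polynomial.natDegree_lt_iff_degree_lt hu3).mpr
    (lt_of_le_of_lt (Polynomial.degree_sub_le _ _) (max_lt hdeg2 hdeg3))
  have hvT1 : ∀ i ∈ T, u1.eval (α i) = 0 := by
    intro i hi
    rw [hTdef, Finset.mem_filter] at hi
    simp only [hu1def, Polynomial.eval_sub, sub_eq_zero]
    exact hi.2.1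
  have hvT2 : ∀ i ∈ T, u2.eval (α i) = 0 := by
    intro i hi
    rw [hTdef, Finset.mem_filter] at hi
    simp only [hu2def, Polynomial.eval_sub, sub_eq_zero]
    exact hi.2.2.symm
  have hvT3 : ∀ i ∈ T, u3.eval (α i) = 0 := by
    intro i hi
    rw [hTdef, Finset.mem_filter] at hi
    simp only [hu3def, Polynomial.eval_sub, sub_eq_zero]
    exact (hi.2.1.symm.trans hi.2.2)
  set P : Polynomial F := ∏ i ∈ T, (Polynomial.X - Polynomial.C (α i)) with hPdef
  have hPmonic : P.Monic := Polynomial.monic_prod_of_monic _ _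
    (fun i _ => Polynomial.monic_X_sub_C _)
  have hPdeg : P.natDegree = T.card := by
    rw [hPdef, Polynomial.natDegree_prod _ _ (fun i _ => Polynomial.X_sub_C_ne_zero (α i))]
    simp
  obtain ⟨w1, hw1e⟩ := prod_dvd' hα T u1 hvT1
  obtain ⟨w2, hw2e⟩ := prod_dvd' hα T u2 hvT2
  obtain ⟨w3, hw3e⟩ := prod_dvd' hα T u3 hvT3
  have hw1 : w1 ≠ 0 := by intro h0; exact hu1 (by rw [hw1e, h0, mul_zero])
  have hw2 : w2 ≠ 0 := by intro h0; exact hu2 (by rw [hw2e, h0, mul_zero])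
  have hw3 : w3 ≠ 0 := by intro h0; exact hu3 (by rw [hw3e, h0, mul_zero])
  have htk : T.card < k :=
    lt_of_le_of_lt (card_le_natDegree' hα hu1 hvT1) hu1deg
  set s : ℕ := k - T.card with hsdef
  have hspos : 0 < s := by omega
  have hd1' : u1.natDegree = T.card + w1.natDegree := by
    rw [hw1e, Polynomial.natDegree_mul hPmonic.ne_zero hw1, hPdeg]
  have hd2' : u2.natDegree = T.card + w2.natDegree := by
    rw [hw2e, Polynomial.natDegree_mul hPmonic.ne_zero hw2, hPdeg]
  have hd3' : u3.natDegree = T.card + w3.natDegree := by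
    rw [hw3e, Polynomial.natDegree_mul hPmonic.ne_zero hw3, hPdeg]
  have hw1deg : w1.natDegree < s := by omega
  have hw2deg : w2.natDegree < s := by omega
  have hw3deg : w3.natDegree < s := by omega
  have hPne : ∀ i : Fin n, (¬ (f1.eval (α i) = f2.eval (α i) ∧ f1.eval (α i) = f3.eval (α i)))
      → P.eval (α i) ≠ 0 := by
    intro i hi
    rw [hPdef, Polynomial.eval_prod]
    apply Finset.prod_ne_zero_iff.mpr
    intro j hj
    simp only [Polynomial.eval_sub, Polynomial.eval_X, Polynomial.eval_C]
    intro h0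
    have hij : i = j := hα (sub_eq_zero.mp h0)
    rw [hTdef, Finset.mem_filter] at hj
    exact hi (hij ▸ hj.2)
  have hw1van : ∀ i ∈ A0, w1.eval (α i) = 0 := by
    intro i hi
    rw [hA0def, Finset.mem_filter] at hi
    have hu : u1.eval (α i) = 0 := by
      simp only [hu1def, Polynomial.eval_sub, sub_eq_zero]; exact hi.2.1
    rw [hw1e, Polynomial.eval_mul] at hu
    exact (mul_eq_zero.mp hu).resolve_left (hPne i hi.2.2)
  have hw2van : ∀ i ∈ B0, w2.eval (α i) = 0 := by
    intro i hi
    rw [hB0def, Finset.mem_filter] at hi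
    have hu : u2.eval (α i) = 0 := by
      simp only [hu2def, Polynomial.eval_sub, sub_eq_zero]; exact hi.2.1.symm
    rw [hw2e, Polynomial.eval_mul] at hu
    exact (mul_eq_zero.mp hu).resolve_left (hPne i hi.2.2)
  have hw3van : ∀ i ∈ C0, w3.eval (α i) = 0 := by
    intro i hi
    rw [hC0def, Finset.mem_filter] at hi
    have hu : u3.eval (α i) = 0 := by
      simp only [hu3def, Polynomial.eval_sub, sub_eq_zero]; exact hi.2.1
    rw [hw3e, Polynomial.eval_mul] at hu
    exact (mul_eq_zero.mp hu).resolve_left (hPne i hi.2.2)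
  have hA0card : A0.card ≤ s := le_trans (card_le_natDegree' hα hw1 hw1van) hw1deg.le
  have hB0card : B0.card ≤ s := le_trans (card_le_natDegree' hα hw2 hw2van) hw2deg.le
  have hC0card : C0.card ≤ s := le_trans (card_le_natDegree' hα hw3 hw3van) hw3deg.le
  have hS : 2 * s ≤ A0.card + B0.card + C0.card := by omega
  obtain ⟨a', b', c', ha'A, hb'B, hc'C, ha's, hb's, hc's, habc⟩ :
      ∃ a' b' c' : ℕ, a' ≤ A0.card ∧ b' ≤ B0.card ∧ c' ≤ C0.card ∧
        a' ≤ s ∧ b' ≤ s ∧ c' ≤ s ∧ a' + b' + c' = 2 * s :=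
    ⟨min A0.card s, min B0.card (2 * s - min A0.card s),
      2 * s - min A0.card s - min B0.card (2 * s - min A0.card s), by omega⟩
  obtain ⟨A', hA'sub, hA'card⟩ := Finset.exists_subset_card_eq ha'A
  obtain ⟨B', hB'sub, hB'card⟩ := Finset.exists_subset_card_eq hb'B
  obtain ⟨C', hC'sub, hC'card⟩ := Finset.exists_subset_card_eq hc'C
  -- pairwise disjointness
  have hAB : ∀ x, x ∈ A' → x ∈ B' → False := by
    intro x h1 h2
    have h1' := hA'sub h1; have h2' := hB'sub h2
    rw [hA0def, Finset.mem_filter] at h1'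
    rw [hB0def, Finset.mem_filter] at h2'
    exact h1'.2.2 ⟨h1'.2.1, h2'.2.1⟩
  have hAC : ∀ x, x ∈ A' → x ∈ C' → False := by
    intro x h1 h2
    have h1' := hA'sub h1; have h2' := hC'sub h2
    rw [hA0def, Finset.mem_filter] at h1'
    rw [hC0def, Finset.mem_filter] at h2'
    exact h1'.2.2 ⟨h1'.2.1, h1'.2.1.trans h2'.2.1⟩
  have hBC : ∀ x, x ∈ B' → x ∈ C' → False := by
    intro x h1 h2
    have h1' := hB'sub h1; have h2' := hC'sub h2
    rw [hB0def, Finset.mem_filter] at h1'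
    rw [hC0def, Finset.mem_filter] at h2'
    exact h1'.2.2 ⟨h1'.2.1.trans h2'.2.1.symm, h1'.2.1⟩
  have hI12 : (A' ∪ B') ∩ (A' ∪ C') = A' := by
    ext x
    simp only [Finset.mem_inter, Finset.mem_union]
    constructor
    · rintro ⟨h1 | h1, h2 | h2⟩
      · exact h1
      · exact h1
      · exact h2
      · exact (hBC x h1 h2).elim
    · intro hx; exact ⟨Or.inl hx, Or.inl hx⟩
  have hI13 : (A' ∪ B') ∩ (B' ∪ C') = B' := by
    ext x
    simp only [Finset.mem_inter, Finset.mem_union]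
    constructor
    · rintro ⟨h1 | h1, h2 | h2⟩
      · exact h2
      · exact (hAC x h1 h2).elim
      · exact h1
      · exact h1
    · intro hx; exact ⟨Or.inr hx, Or.inl hx⟩
  have hI23 : (A' ∪ C') ∩ (B' ∪ C') = C' := by
    ext x
    simp only [Finset.mem_inter, Finset.mem_union]
    constructor
    · rintro ⟨h1 | h1, h2 | h2⟩
      · exact (hAB x h1 h2).elim
      · exact h2
      · exact h1
      · exact h1
    · intro hx; exact ⟨Or.inr hx, Or.inr hx⟩
  -- the kernel relation
  have hwsum : w1 + w2 + w3 = 0 := by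
    have hP0 : P * (w1 + w2 + w3) = 0 := by
      rw [mul_add, mul_add, ← hw1e, ← hw2e, ← hw3e, hu1def, hu2def, hu3def]; ring
    exact (mul_eq_zero.mp hP0).resolve_left hPmonic.ne_zero
  refine ⟨s, A' ∪ B', A' ∪ C', B' ∪ C', Nat.sub_le k T.card, ?_, ?_, ?_, ?_, ?_, ?_⟩
  · rw [hI12]
    rw [Finset.eq_empty_iff_forall_notMem]
    intro x hx
    rw [Finset.mem_inter, Finset.mem_union] at hx
    rcases hx.2 with h2 | h2
    · exact hAB x hx.1 h2
    · exact hAC x hx.1 h2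
  · rw [hI12, hI13, hI23, hA'card, hB'card, hC'card]; exact habc
  · rw [hI12, hA'card]; exact ha's
  · rw [hI13, hB'card]; exact hb's
  · rw [hI23, hC'card]; exact hc's
  · rw [hI12, hI13, hI23]
    intro e
    rw [RingHom.map_det]
    rw [← Matrix.exists_mulVec_eq_zero_iff]
    refine ⟨Sum.elim (fun j : Fin s => w1.coeff j)
      (Sum.elim (fun j : Fin s => w2.coeff j) (fun j : Fin s => w3.coeff j)), ?_, ?_⟩
    · intro h0
      have hc' : w1.coeff w1.natDegree ≠ 0 := by
        rw [Polynomial.coeff_natDegree]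
        exact Polynomial.leadingCoeff_ne_zero.mpr hw1
      exact hc' (by simpa using congrFun h0 (Sum.inl ⟨w1.natDegree, hw1deg⟩))
    · have keyrow : ∀ r, (∑ j : Fin s, (MvPolynomial.eval α) (M3 F n s A' B' C' r (Sum.inl j))
          * w1.coeff (j : ℕ))
          + ((∑ j : Fin s, (MvPolynomial.eval α) (M3 F n s A' B' C' r (Sum.inr (Sum.inl j)))
          * w2.coeff (j : ℕ))
          + (∑ j : Fin s, (MvPolynomial.eval α) (M3 F n s A' B' C' r (Sum.inr (Sum.inr j)))
          * w3.coeff (j : ℕ))) = 0 := by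
        intro r
        rcases r with i | a | b | c
        · simp only [M3, apply_ite (MvPolynomial.eval α), map_one, map_zero, ite_mul, one_mul,
            zero_mul, Finset.sum_ite_eq, Finset.mem_univ, if_true]
          have hco := congrArg (fun p => Polynomial.coeff p (i : ℕ)) hwsum
          simp only [Polynomial.coeff_add, Polynomial.coeff_zero] at hco
          linear_combination hco
        · simp only [M3, map_zero, zero_mul, Finset.sum_const_zero, add_zero, map_pow,
            MvPolynomial.eval_X]
          have hv : w1.eval (α a.1) = 0 := hw1van a.1 (hA'sub a.2)
          rw [Polynomial.eval_eq_sum_range' hw1deg,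
            ← Fin.sum_univ_eq_sum_range (fun j => w1.coeff j * α a.1 ^ j) s] at hv
          rw [← hv]
          exact Finset.sum_congr rfl (fun j _ => mul_comm _ _)
        · simp only [M3, map_zero, zero_mul, Finset.sum_const_zero, add_zero, zero_add, map_pow,
            MvPolynomial.eval_X]
          have hv : w2.eval (α b.1) = 0 := hw2van b.1 (hB'sub b.2)
          rw [Polynomial.eval_eq_sum_range' hw2deg,
            ← Fin.sum_univ_eq_sum_range (fun j => w2.coeff j * α b.1 ^ j) s] at hv
          rw [← hv]
          exact Finset.sum_congr rfl (fun j _ => mul_comm _ _)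
        · simp only [M3, map_zero, zero_mul, Finset.sum_const_zero, add_zero, zero_add, map_pow,
            MvPolynomial.eval_X]
          have hv : w3.eval (α c.1) = 0 := hw3van c.1 (hC'sub c.2)
          rw [Polynomial.eval_eq_sum_range' hw3deg,
            ← Fin.sum_univ_eq_sum_range (fun j => w3.coeff j * α c.1 ^ j) s] at hv
          rw [← hv]
          exact Finset.sum_congr rfl (fun j _ => mul_comm _ _)
      funext r0
      simp only [Matrix.mulVec, dotProduct, RingHom.mapMatrix_apply, Matrix.map_apply,
        Matrix.submatrix_apply, id_eq, Pi.zero_apply, Fintype.sum_sum_type, Sum.elim_inl,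
        Sum.elim_inr]
      exact keyrow (e r0)
end

section
/- Let n > k be positive integers and c = 2^{3n}k^2 + n^2. For any prime power q, all but at most c·q^{n-1} vectors α ∈ F_q^n have distinct coordinates and define an [n,k]-RS code that is ((2/3)(1 - k/n), 2) list-decodable. -/
/-!
Non-injective evaluation vectors lie on the `n(n-1)` hyperplanes `α i = α j`. If an injective `α`
is not list decodable, some word `y` has three distinct codewords `f₁(α), f₂(α), f₃(α)` within
distance `2(n-k)/3`. Their agreement sets `Aᵢ` with `y` meet pairwise in fewer than `k` points, and
inclusion–exclusion gives `2k + |A₁ ∩ A₂ ∩ A₃| ≤ Σ |Aᵢ ∩ Aⱼ|`. Write `f₁ - f₂ = nodal(A₁ ∩ A₂) u`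
and `f₂ - f₃ = nodal(A₂ ∩ A₃) v`: their sum `f₁ - f₃` vanishes on `(A₁ ∩ A₃) \ A₂`, which has at least
`(k - |A₁ ∩ A₂|) + (k - |A₂ ∩ A₃|)` points, so the coefficients of `(u, v)` are a nonzero kernel
vector of a square alternant matrix. Its determinant is a polynomial of degree `≤ k²` in `α` that
depends only on the pattern `(A₁, A₂, A₃)`, and it is nonzero: keeping the row variables free and
moving all others into the coefficients turns it into a generalized Vandermonde determinant of a
linearly independent family. Schwartz–Zippel and a union bound over the `≤ 2^{3n}` patterns finish
the count.
-/

open Finset Polynomial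

section Alternant

variable {R S ι : Type*} [CommRing R] [CommRing S]

def alternant (ψ : ι → R[X]) (x : ι → R) : Matrix ι ι R :=
  Matrix.of fun i j => (ψ j).eval (x i)

variable [Fintype ι]

theorem LinearIndependent.polynomial_map_C {σ : Type*} {ψ : ι → R[X]}
    (h : LinearIndependent R ψ) :
    LinearIndependent (MvPolynomial σ R) fun j => (ψ j).map (MvPolynomial.C (σ := σ)) := by
  rw [Fintype.linearIndependent_iff] at h ⊢
  intro c hc j
  ext μ
  refine h (fun j => (c j).coeff μ) ?_ j
  ext d
  have := congrArg (fun p => MvPolynomial.coeff μ (p.coeff d)) hc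
  simpa [finsetSum_coeff, MvPolynomial.coeff_sum, Polynomial.smul_eq_C_mul,
    MvPolynomial.coeff_C_mul, mul_comm (c _), mul_comm (MvPolynomial.coeff _ _)] using this

variable [DecidableEq ι]

theorem map_det_alternant (f : R →+* S) (ψ : ι → R[X]) (x : ι → R) :
    f (alternant ψ x).det = (alternant (fun j => (ψ j).map f) (f ∘ x)).det := by
  rw [RingHom.map_det]
  congr 1
  ext i j
  simp [alternant]

theorem det_alternant_eq_zero [IsDomain R] {ψ : ι → R[X]} {x : ι → R} {c : ι → R} (hc : c ≠ 0)
    (h : ∀ i, (∑ j, c j • ψ j).eval (x i) = 0) : (alternant ψ x).det = 0 :=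
  Matrix.exists_mulVec_eq_zero_iff.mp ⟨c, hc, funext fun i => by
    simpa [Matrix.mulVec, dotProduct, alternant, eval_finsetSum, mul_comm] using h i⟩

theorem det_alternant_X_ne_zero_fin [IsDomain R] :
    ∀ {m : ℕ} {ψ : Fin m → R[X]}, LinearIndependent R ψ →
      (alternant (fun j => (ψ j).map MvPolynomial.C)
        (MvPolynomial.X : Fin m → MvPolynomial (Fin m) R)).det ≠ 0
  | 0, _, _ => by simp
  | m + 1, ψ, h => by
    -- Laplace expansion along the row of `X 0`: independence of the `ψ j` over the remaining
    -- variables forces the minor of column `0` to vanish.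
    set ε := (MvPolynomial.finSuccEquiv R m).toRingHom
    have hεC : ε.comp MvPolynomial.C = Polynomial.C.comp MvPolynomial.C :=
      RingHom.ext fun a => by simp [ε, MvPolynomial.finSuccEquiv_apply]
    have hε : ε (alternant (fun j => (ψ j).map MvPolynomial.C) MvPolynomial.X).det =
        ∑ j : Fin (m + 1), ((-1) ^ (j : ℕ) *
          (alternant (fun l => (ψ (j.succAbove l)).map MvPolynomial.C) MvPolynomial.X).det) •
            (ψ j).map (MvPolynomial.C (σ := Fin m)) := by
      rw [map_det_alternant, Matrix.det_succ_row_zero]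
      refine sum_congr rfl fun j _ => ?_
      have hrow (i : Fin m) : ε (MvPolynomial.X i.succ) = Polynomial.C (MvPolynomial.X i) :=
        MvPolynomial.finSuccEquiv_X_succ
      have hminor : (alternant (fun j => ((ψ j).map MvPolynomial.C).map ε)
            (ε ∘ MvPolynomial.X)).submatrix Fin.succ j.succAbove =
          Polynomial.C.mapMatrix
            (alternant (fun l => (ψ (j.succAbove l)).map MvPolynomial.C) MvPolynomial.X) := by
        refine Matrix.ext fun i l => ?_
        simp only [alternant, Matrix.submatrix_apply, Matrix.of_apply, Function.comp_apply,
          RingHom.mapMatrix_apply, Matrix.map_apply, Polynomial.map_map, hεC, hrow]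
        rw [← Polynomial.map_map, eval_map_apply]
      have hX0 : ε (MvPolynomial.X 0) = Polynomial.X := MvPolynomial.finSuccEquiv_X_zero
      rw [hminor, ← RingHom.map_det, Polynomial.smul_eq_C_mul]
      simp only [alternant, Matrix.of_apply, Function.comp_apply, Polynomial.map_map, hεC, hX0]
      rw [← Polynomial.map_map, eval_map, eval₂_C_X, map_mul, map_pow, map_neg, map_one]
      ring
    intro h0
    rw [h0, map_zero, eq_comm] at hε
    have := (Fintype.linearIndependent_iff.mp h.polynomial_map_C) _ hε 0
    simp only [Fin.val_zero, pow_zero, one_mul] at this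
    exact det_alternant_X_ne_zero_fin (h.comp _ Fin.succAbove_right_injective) this

theorem det_alternant_X_ne_zero [IsDomain R] {ψ : ι → R[X]} (h : LinearIndependent R ψ) :
    (alternant (fun j => (ψ j).map MvPolynomial.C)
      (MvPolynomial.X : ι → MvPolynomial ι R)).det ≠ 0 := by
  set e := Fintype.equivFin ι
  set ρ := (MvPolynomial.rename (R := R) e).toRingHom
  have hρC : ρ.comp MvPolynomial.C = MvPolynomial.C := RingHom.ext fun a => by simp [ρ]
  have hρ : ρ (alternant (fun j => (ψ j).map MvPolynomial.C) MvPolynomial.X).det =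
      (alternant (fun j => (ψ (e.symm j)).map MvPolynomial.C) MvPolynomial.X).det := by
    rw [map_det_alternant, ← Matrix.det_submatrix_equiv_self e.symm]
    congr 1
    refine Matrix.ext fun i l => ?_
    simp only [alternant, Matrix.submatrix_apply, Matrix.of_apply, Function.comp_apply,
      Polynomial.map_map, hρC]
    simp [ρ]
  intro h0
  rw [h0, map_zero, eq_comm] at hρ
  exact det_alternant_X_ne_zero_fin (h.comp _ e.symm.injective) hρ

end Alternant

section NodalFamily

variable {R S σ : Type*} [CommRing R] [CommRing S]

theorem coeff_sum_fin_C_mul_X_pow {c : ℕ} (a : Fin c → R) (j : Fin c) :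
    (∑ i : Fin c, C (a i) * X ^ (i : ℕ)).coeff j = a j := by
  simp [finsetSum_coeff, Fin.val_inj]

theorem sum_fin_C_coeff_mul_X_pow {c : ℕ} {u : R[X]} (hu : u.degree < c) :
    ∑ i : Fin c, C (u.coeff i) * X ^ (i : ℕ) = u :=
  (sum_fin (fun i a => C a * X ^ i) (by simp) hu).trans u.sum_C_mul_X_pow_eq

noncomputable def nodalFamily (v : σ → R) (B₁ B₂ : Finset σ) (c₁ c₂ : ℕ) :
    Fin c₁ ⊕ Fin c₂ → R[X] :=
  Sum.elim (fun j => Lagrange.nodal B₁ v * X ^ (j : ℕ)) fun j => Lagrange.nodal B₂ v * X ^ (j : ℕ)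

variable {v : σ → R} {B₁ B₂ : Finset σ} {c₁ c₂ : ℕ}

theorem nodalFamily_map (f : R →+* S) (j : Fin c₁ ⊕ Fin c₂) :
    (nodalFamily v B₁ B₂ c₁ c₂ j).map f = nodalFamily (f ∘ v) B₁ B₂ c₁ c₂ j := by
  cases j <;> simp [nodalFamily, Lagrange.nodal, Polynomial.map_prod]

theorem nodalFamily_congr [DecidableEq σ] {v' : σ → R} (h : ∀ w ∈ B₁ ∪ B₂, v w = v' w) :
    nodalFamily v B₁ B₂ c₁ c₂ = nodalFamily v' B₁ B₂ c₁ c₂ := by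
  have hnodal : ∀ B ⊆ B₁ ∪ B₂, Lagrange.nodal B v = Lagrange.nodal B v' := fun B hB =>
    Finset.prod_congr rfl fun w hw => by rw [h w (hB hw)]
  ext1 j
  cases j <;> simp [nodalFamily, hnodal B₁ subset_union_left, hnodal B₂ subset_union_right]

theorem sum_smul_nodalFamily (a : Fin c₁ ⊕ Fin c₂ → R) :
    ∑ j, a j • nodalFamily v B₁ B₂ c₁ c₂ j =
      Lagrange.nodal B₁ v * ∑ i : Fin c₁, C (a (.inl i)) * X ^ (i : ℕ) +
        Lagrange.nodal B₂ v * ∑ i : Fin c₂, C (a (.inr i)) * X ^ (i : ℕ) := by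
  simp only [Fintype.sum_sum_type, nodalFamily, Sum.elim_inl, Sum.elim_inr, mul_sum,
    smul_eq_C_mul]
  congr 1 <;> exact sum_congr rfl fun _ _ => by ring

theorem linearIndependent_nodalFamily [IsDomain R] [DecidableEq σ] (hv : Function.Injective v)
    (hc : c₁ ≤ #(B₂ \ B₁)) : LinearIndependent R (nodalFamily v B₁ B₂ c₁ c₂) := by
  rw [Fintype.linearIndependent_iff]
  intro a ha
  rw [sum_smul_nodalFamily] at ha
  set U := ∑ i : Fin c₁, C (a (.inl i)) * X ^ (i : ℕ)
  set V := ∑ i : Fin c₂, C (a (.inr i)) * X ^ (i : ℕ)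
  have hU : U = 0 := by
    refine eq_zero_of_degree_lt_of_eval_index_eq_zero _ hv.injOn
      ((degree_sum_fin_lt _).trans_le (by exact_mod_cast hc)) fun w hw => ?_
    rw [mem_sdiff] at hw
    have := congrArg (eval (v w)) ha
    rw [eval_add, eval_mul, eval_mul, Lagrange.eval_nodal_at_node hw.1, zero_mul, add_zero,
      eval_zero] at this
    exact (mul_eq_zero.mp this).resolve_left
      (Lagrange.eval_nodal_not_at_node fun w' hw' h => hw.2 (hv h ▸ hw'))
  have hV : V = 0 := by
    rw [hU, mul_zero, zero_add] at ha
    exact (mul_eq_zero.mp ha).resolve_left Lagrange.nodal_ne_zero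
  rintro (i | i)
  · rw [← coeff_sum_fin_C_mul_X_pow (fun i => a (.inl i)) i]
    exact congrArg (coeff · i) hU
  · rw [← coeff_sum_fin_C_mul_X_pow (fun i => a (.inr i)) i]
    exact congrArg (coeff · i) hV

end NodalFamily

theorem Lagrange.nodal_dvd {K ι : Type*} [Field K] {s : Finset ι} {v : ι → K}
    (hv : Set.InjOn v s) {p : K[X]} (h : ∀ i ∈ s, p.eval (v i) = 0) : nodal s v ∣ p :=
  prod_dvd_of_coprime (fun _ hi _ hj hij =>
      isCoprime_X_sub_C_of_isUnit_sub (sub_ne_zero.mpr (hv.ne hi hj hij)).isUnit)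
    fun i hi => dvd_iff_isRoot.mpr (h i hi)

theorem Lagrange.exists_eq_nodal_mul {K ι : Type*} [Field K] {s : Finset ι} {v : ι → K}
    (hv : Set.InjOn v s) {p : K[X]} {c : ℕ} (h : ∀ i ∈ s, p.eval (v i) = 0)
    (hp : p.degree < (#s + c : ℕ)) : ∃ u : K[X], u.degree < c ∧ p = nodal s v * u := by
  obtain ⟨u, rfl⟩ := nodal_dvd hv h
  refine ⟨u, ?_, rfl⟩
  rwa [degree_mul, degree_nodal, Nat.cast_add,
    WithBot.add_lt_add_iff_left (WithBot.natCast_ne_bot _)] at hp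

theorem MvPolynomial.totalDegree_det_le {R σ ι : Type*} [CommRing R] [Fintype ι] [DecidableEq ι]
    (M : Matrix ι ι (MvPolynomial σ R)) (d : ι → ℕ) (h : ∀ i j, (M i j).totalDegree ≤ d j) :
    M.det.totalDegree ≤ ∑ j, d j := by
  rw [Matrix.det_apply]
  refine (totalDegree_finsetSum _ _).trans (Finset.sup_le fun τ _ => ?_)
  have hsign :
      (Equiv.Perm.sign τ • ∏ j, M (τ j) j).totalDegree = (∏ j, M (τ j) j).totalDegree := by
    rcases Int.units_eq_one_or (Equiv.Perm.sign τ) with hτ | hτ <;> simp [hτ, totalDegree_neg]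
  rw [hsign]
  exact (totalDegree_finsetProd _ _).trans (sum_le_sum fun j _ => h _ j)

section PatternPolynomial

variable {F σ : Type*} [Field F] {c₁ c₂ : ℕ} (B₁ B₂ : Finset σ)
  (r : Fin c₁ ⊕ Fin c₂ → σ)

noncomputable def patternPoly : MvPolynomial σ F :=
  (alternant (nodalFamily MvPolynomial.X B₁ B₂ c₁ c₂) (MvPolynomial.X ∘ r)).det

theorem eval_patternPoly (α : σ → F) :
    MvPolynomial.eval α (patternPoly B₁ B₂ r) =
      (alternant (nodalFamily α B₁ B₂ c₁ c₂) (α ∘ r)).det := by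
  have hX : (MvPolynomial.eval α) ∘ MvPolynomial.X = α := funext MvPolynomial.eval_X
  rw [patternPoly, map_det_alternant]
  simp_rw [nodalFamily_map, ← Function.comp_assoc, hX]

theorem patternPoly_ne_zero [DecidableEq σ] (hr : Function.Injective r)
    (hrB : ∀ i, r i ∉ B₁ ∪ B₂) (hc : c₁ ≤ #(B₂ \ B₁)) : patternPoly (F := F) B₁ B₂ r ≠ 0 := by
  -- `Θ` keeps the row variables `X (r i)` free and moves the others into the coefficients.
  set Θ : MvPolynomial σ F →+* MvPolynomial (Fin c₁ ⊕ Fin c₂) (MvPolynomial σ F) :=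
    MvPolynomial.eval₂Hom (MvPolynomial.C.comp MvPolynomial.C)
      (Function.extend r MvPolynomial.X (MvPolynomial.C ∘ MvPolynomial.X))
  have hΘ : Θ (patternPoly B₁ B₂ r) = (alternant (fun j =>
      (nodalFamily MvPolynomial.X B₁ B₂ c₁ c₂ j).map MvPolynomial.C) MvPolynomial.X).det := by
    have hXr : Θ ∘ MvPolynomial.X ∘ r = MvPolynomial.X := funext fun i => by
      simp [Θ, hr.extend_apply]
    have hXB : nodalFamily (Θ ∘ MvPolynomial.X) B₁ B₂ c₁ c₂ =
        nodalFamily (MvPolynomial.C ∘ (MvPolynomial.X : σ → MvPolynomial σ F)) B₁ B₂ c₁ c₂ :=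
      nodalFamily_congr fun w hw => by
        have hw' : ¬∃ i, r i = w := fun ⟨i, hi⟩ => hrB i (by rwa [hi])
        simp only [Function.comp_apply, Θ, MvPolynomial.eval₂Hom_X',
          Function.extend_apply' _ _ _ hw']
    rw [patternPoly, map_det_alternant, hXr]
    simp_rw [nodalFamily_map, hXB]
  intro h0
  rw [h0, map_zero, eq_comm] at hΘ
  exact det_alternant_X_ne_zero (linearIndependent_nodalFamily MvPolynomial.X_injective hc) hΘ

theorem totalDegree_patternPoly_le :
    (patternPoly (F := F) B₁ B₂ r).totalDegree ≤
      ∑ j : Fin c₁, (#B₁ + (j : ℕ)) + ∑ j : Fin c₂, (#B₂ + (j : ℕ)) := by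
  have hentry : ∀ (B : Finset σ) (x : σ) (j : ℕ),
      ((Lagrange.nodal B MvPolynomial.X * X ^ j).eval (MvPolynomial.X x) :
        MvPolynomial σ F).totalDegree ≤ #B + j := by
    intro B x j
    rw [eval_mul, Lagrange.eval_nodal, eval_pow, eval_X]
    refine (MvPolynomial.totalDegree_mul _ _).trans (add_le_add ?_ ?_)
    · refine (MvPolynomial.totalDegree_finsetProd _ _).trans ?_
      refine (sum_le_card_nsmul _ _ 1 fun w _ => ?_).trans (by simp)
      exact (MvPolynomial.totalDegree_sub _ _).trans (by simp [MvPolynomial.totalDegree_X])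
    · exact (MvPolynomial.totalDegree_pow _ _).trans (by simp [MvPolynomial.totalDegree_X])
  refine (MvPolynomial.totalDegree_det_le _ (Sum.elim (fun j : Fin c₁ => #B₁ + (j : ℕ))
    (fun j : Fin c₂ => #B₂ + (j : ℕ))) fun i j => ?_).trans_eq (Fintype.sum_sum_type _)
  cases j <;> exact hentry _ _ _

theorem eval_patternPoly_eq_zero {α : σ → F} (hα : Function.Injective α) {g h : F[X]}
    (hg0 : g ≠ 0) (hg : ∀ w ∈ B₁, g.eval (α w) = 0) (hh : ∀ w ∈ B₂, h.eval (α w) = 0)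
    (hgd : g.degree < (#B₁ + c₁ : ℕ)) (hhd : h.degree < (#B₂ + c₂ : ℕ))
    (hgh : ∀ i, (g + h).eval (α (r i)) = 0) :
    MvPolynomial.eval α (patternPoly B₁ B₂ r) = 0 := by
  obtain ⟨u, hu, rfl⟩ := Lagrange.exists_eq_nodal_mul hα.injOn hg hgd
  obtain ⟨v, hv, rfl⟩ := Lagrange.exists_eq_nodal_mul hα.injOn hh hhd
  set coeffs : Fin c₁ ⊕ Fin c₂ → F := Sum.elim (fun i => u.coeff i) (fun i => v.coeff i)
  have hcomb : ∑ j, coeffs j • nodalFamily α B₁ B₂ c₁ c₂ j =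
      Lagrange.nodal B₁ α * u + Lagrange.nodal B₂ α * v := by
    rw [sum_smul_nodalFamily]
    simp only [coeffs, Sum.elim_inl, Sum.elim_inr, sum_fin_C_coeff_mul_X_pow hu,
      sum_fin_C_coeff_mul_X_pow hv]
  rw [eval_patternPoly]
  refine det_alternant_eq_zero (fun h0 => hg0 ?_) fun i => by rw [hcomb]; exact hgh i
  have hcoeff (i : Fin c₁) : u.coeff i = 0 := congrFun h0 (.inl i)
  have hu0 : u = 0 := by
    rw [← sum_fin_C_coeff_mul_X_pow hu]
    simp [hcoeff]
  rw [hu0, mul_zero]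

end PatternPolynomial

theorem two_mul_sum_fin_add_le (b c : ℕ) : 2 * ∑ j : Fin c, (b + (j : ℕ)) ≤ (b + c) ^ 2 := by
  rw [Fin.sum_univ_eq_sum_range (fun j => b + j), sum_add_distrib, sum_const, card_range,
    smul_eq_mul, mul_add, mul_comm 2 (∑ _ ∈ _, _), Finset.sum_range_id_mul_two]
  have : c * (c - 1) ≤ c * c := Nat.mul_le_mul_left _ (Nat.sub_le _ _)
  nlinarith

section Counting

variable {F : Type*} [Field F] [Fintype F] [DecidableEq F] {n : ℕ}

theorem MvPolynomial.card_zeros_le_totalDegree_mul {p : MvPolynomial (Fin n) F} (hp : p ≠ 0) :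
    #{x : Fin n → F | MvPolynomial.eval x p = 0} ≤ p.totalDegree * Fintype.card F ^ (n - 1) := by
  cases n with
  | zero =>
    obtain ⟨a, rfl⟩ := MvPolynomial.C_surjective (Fin 0) p
    simp_all
  | succ n =>
    have hq : (0 : ℚ≥0) < Fintype.card F := by exact_mod_cast Fintype.card_pos
    have h := MvPolynomial.schwartz_zippel_totalDegree hp univ
    rw [Fintype.piFinset_univ, card_univ, div_le_div_iff₀ (by positivity) hq, pow_succ,
      ← mul_assoc, mul_le_mul_iff_left₀ hq] at h
    exact_mod_cast h

theorem card_filter_le_of_forall_exists_vanishing {ι : Type*} (s : Finset ι) (d : ℕ)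
    (P : (Fin n → F) → Prop) [DecidablePred P] (Q : ι → (Fin n → F) → Prop)
    (hPQ : ∀ α, P α → ∃ i ∈ s, Q i α)
    (hQ : ∀ i ∈ s, ∃ D : MvPolynomial (Fin n) F, D ≠ 0 ∧ D.totalDegree ≤ d ∧
      ∀ α, Q i α → MvPolynomial.eval α D = 0) :
    #{α | P α} ≤ #s * (d * Fintype.card F ^ (n - 1)) := by
  choose! D hD0 hDd hDQ using hQ
  refine (card_le_card fun α hα => ?_).trans
    (card_biUnion_le_card_mul s (fun i => {α | MvPolynomial.eval α (D i) = 0}) _ fun i hi =>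
      (MvPolynomial.card_zeros_le_totalDegree_mul (hD0 i hi)).trans
        (Nat.mul_le_mul_right _ (hDd i hi)))
  obtain ⟨i, hi, hQi⟩ := hPQ α (mem_filter.mp hα).2
  exact mem_biUnion.mpr ⟨i, hi, mem_filter.mpr ⟨mem_univ _, hDQ i hi α hQi⟩⟩

theorem card_not_injective_le :
    #{α : Fin n → F | ¬ Function.Injective α} ≤ n ^ 2 * Fintype.card F ^ (n - 1) := by
  refine (card_filter_le_of_forall_exists_vanishing (univ : Finset (Fin n)).offDiag 1 _
    (fun p α => α p.1 = α p.2) (fun α hα => ?_) fun p hp => ?_).trans ?_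
  · simp only [Function.Injective, not_forall] at hα
    obtain ⟨i, j, hij, hne⟩ := hα
    exact ⟨(i, j), by simpa using hne, hij⟩
  · refine ⟨MvPolynomial.X p.1 - MvPolynomial.X p.2, ?_, ?_, fun α hα => by simp [hα]⟩
    · rw [sub_ne_zero]
      exact fun h => (mem_offDiag.mp hp).2.2 (MvPolynomial.X_injective h)
    · exact (MvPolynomial.totalDegree_sub _ _).trans (by simp [MvPolynomial.totalDegree_X])
  · rw [one_mul, offDiag_card, card_univ, Fintype.card_fin, sq]
    exact Nat.mul_le_mul_right _ (Nat.sub_le _ _)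

end Counting

theorem Finset.card_add_card_add_card_add_card_inter_inter {α : Type*} [DecidableEq α]
    (A B C : Finset α) :
    #A + #B + #C + #(A ∩ B ∩ C) = #(A ∪ B ∪ C) + #(A ∩ B) + #(B ∩ C) + #(A ∩ C) := by
  have hAB := card_union_add_card_inter A B
  have hABC := card_union_add_card_inter (A ∪ B) C
  have hcap := card_union_add_card_inter (A ∩ C) (B ∩ C)
  have htriple : A ∩ C ∩ (B ∩ C) = A ∩ B ∩ C := by
    ext; simp only [mem_inter]; tauto
  rw [union_inter_distrib_right] at hABC
  rw [htriple] at hcap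
  omega

theorem Polynomial.card_lt_of_eval_index_eq {R ι : Type*} [CommRing R] [IsDomain R]
    {f g : R[X]} {v : ι → R} {s : Finset ι} {k : ℕ} (hfg : f ≠ g) (hf : f.degree < k)
    (hg : g.degree < k) (hv : Set.InjOn v s) (h : ∀ i ∈ s, f.eval (v i) = g.eval (v i)) :
    #s < k := by
  by_contra! hk
  exact hfg (eq_of_degrees_lt_of_eval_index_eq s hv (hf.trans_le (by exact_mod_cast hk))
    (hg.trans_le (by exact_mod_cast hk)) h)

section ListPattern

variable {F σ : Type*} [Field F] [DecidableEq σ]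

-- The intersection pattern of the agreement sets of three distinct codewords with a word `y`
-- within distance `2(n-k)/3`.
structure IsListPattern (k : ℕ) (A₁ A₂ A₃ : Finset σ) : Prop where
  card_inter₁₂_lt : #(A₁ ∩ A₂) < k
  card_inter₂₃_lt : #(A₂ ∩ A₃) < k
  card_inter₁₃_lt : #(A₁ ∩ A₃) < k
  le_sum_card_inter : 2 * k + #(A₁ ∩ A₂ ∩ A₃) ≤ #(A₁ ∩ A₂) + #(A₂ ∩ A₃) + #(A₁ ∩ A₃)

def HasAgreementSets (k : ℕ) (A₁ A₂ A₃ : Finset σ) (α : σ → F) : Prop :=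
  Function.Injective α ∧ ∃ (y : σ → F) (f₁ f₂ f₃ : F[X]), f₁ ≠ f₂ ∧
    f₁.degree < k ∧ f₂.degree < k ∧ f₃.degree < k ∧
    (∀ w ∈ A₁, f₁.eval (α w) = y w) ∧ (∀ w ∈ A₂, f₂.eval (α w) = y w) ∧
    (∀ w ∈ A₃, f₃.eval (α w) = y w)

namespace IsListPattern

variable {k : ℕ} {A₁ A₂ A₃ : Finset σ}

theorem add_le_card_sdiff (hA : IsListPattern k A₁ A₂ A₃) :
    k - #(A₁ ∩ A₂) + (k - #(A₂ ∩ A₃)) ≤ #((A₁ ∩ A₃) \ A₂) := by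
  have htriple : A₂ ∩ (A₁ ∩ A₃) = A₁ ∩ A₂ ∩ A₃ := by ext; simp only [mem_inter]; tauto
  obtain ⟨h₁₂, h₂₃, -, hsum⟩ := hA
  rw [card_sdiff, htriple]
  omega

theorem le_card_sdiff (hA : IsListPattern k A₁ A₂ A₃) :
    k - #(A₁ ∩ A₂) ≤ #((A₂ ∩ A₃) \ (A₁ ∩ A₂)) := by
  have htriple : A₁ ∩ A₂ ∩ (A₂ ∩ A₃) = A₁ ∩ A₂ ∩ A₃ := by ext; simp only [mem_inter]; tauto
  obtain ⟨-, -, h₁₃, hsum⟩ := hA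
  rw [card_sdiff, htriple]
  omega

theorem exists_vanishing (hA : IsListPattern k A₁ A₂ A₃) :
    ∃ D : MvPolynomial σ F, D ≠ 0 ∧ D.totalDegree ≤ k ^ 2 ∧
      ∀ α, HasAgreementSets k A₁ A₂ A₃ α → MvPolynomial.eval α D = 0 := by
  set B₁ := A₁ ∩ A₂
  set B₂ := A₂ ∩ A₃
  have hk₁ : #B₁ + (k - #B₁) = k := Nat.add_sub_cancel' hA.card_inter₁₂_lt.le
  have hk₂ : #B₂ + (k - #B₂) = k := Nat.add_sub_cancel' hA.card_inter₂₃_lt.le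
  obtain ⟨e⟩ : Nonempty (Fin (k - #B₁) ⊕ Fin (k - #B₂) ↪ ((A₁ ∩ A₃) \ A₂ : Finset σ)) :=
    Function.Embedding.nonempty_of_card_le (by simpa using hA.add_le_card_sdiff)
  set r := fun i => (e i : σ)
  have hr : Function.Injective r := Subtype.val_injective.comp e.injective
  have hrA (i) : r i ∈ A₁ ∧ r i ∈ A₃ ∧ r i ∉ A₂ := by
    have := (e i).2
    simp only [mem_sdiff, mem_inter] at this
    exact ⟨this.1.1, this.1.2, this.2⟩
  refine ⟨patternPoly B₁ B₂ r, patternPoly_ne_zero B₁ B₂ r hr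
    (fun i => by simp [B₁, B₂, (hrA i).2.2]) hA.le_card_sdiff, ?_, ?_⟩
  · have h₁ := two_mul_sum_fin_add_le #B₁ (k - #B₁)
    have h₂ := two_mul_sum_fin_add_le #B₂ (k - #B₂)
    have := totalDegree_patternPoly_le (F := F) B₁ B₂ r
    rw [hk₁] at h₁
    rw [hk₂] at h₂
    omega
  · rintro α ⟨hα, y, f₁, f₂, f₃, h₁₂, hf₁, hf₂, hf₃, hy₁, hy₂, hy₃⟩
    refine eval_patternPoly_eq_zero B₁ B₂ r hα (g := f₁ - f₂) (h := f₂ - f₃)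
      (sub_ne_zero.mpr h₁₂) (fun w hw => ?_) (fun w hw => ?_) ?_ ?_ fun i => ?_
    · rw [mem_inter] at hw
      simp [hy₁ w hw.1, hy₂ w hw.2]
    · rw [mem_inter] at hw
      simp [hy₂ w hw.1, hy₃ w hw.2]
    · rw [hk₁]
      exact (degree_sub_le _ _).trans_lt (max_lt hf₁ hf₂)
    · rw [hk₂]
      exact (degree_sub_le _ _).trans_lt (max_lt hf₂ hf₃)
    · simp [hy₁ _ (hrA i).1, hy₃ _ (hrA i).2.1]

end IsListPattern

end ListPattern

section ListDecoding

variable {F : Type*} [DecidableEq F] {n k : ℕ}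

theorem le_three_mul_card_agree_of_hammingDist_le (hkn : k < n) {y c : Fin n → F}
    (h : (hammingDist y c : ℝ) ≤ 2 / 3 * (1 - (k : ℝ) / n) * n) :
    n + 2 * k ≤ 3 * #{w | c w = y w} := by
  have hsplit : #{w | c w = y w} + hammingDist y c = n := by
    have := card_filter_add_card_filter_not (s := univ) (fun w => c w = y w)
    simp_rw [hammingDist, ne_comm (a := y _)]
    simpa using this
  have hn : (n : ℝ) ≠ 0 := by exact_mod_cast (by omega : n ≠ 0)
  rw [show 2 / 3 * (1 - (k : ℝ) / n) * n = 2 / 3 * (n - k) by field_simp] at h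
  have hdist : 3 * hammingDist y c ≤ 2 * (n - k) := by
    have : ((3 * hammingDist y c : ℕ) : ℝ) ≤ ((2 * (n - k) : ℕ) : ℝ) := by
      push_cast [Nat.cast_sub hkn.le]
      linarith
    exact_mod_cast this
  omega

variable [Field F]

theorem isListPattern_of_agreement {σ : Type*} [Fintype σ] [DecidableEq σ] {α y : σ → F}
    (hα : Function.Injective α) {f : Fin 3 → F[X]} (hf : Function.Injective f)
    (hdeg : ∀ i, (f i).degree < k)
    (hagree : ∀ i, Fintype.card σ + 2 * k ≤ 3 * #{w | (f i).eval (α w) = y w}) :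
    IsListPattern k {w | (f 0).eval (α w) = y w} {w | (f 1).eval (α w) = y w}
      {w | (f 2).eval (α w) = y w} := by
  set A : Fin 3 → Finset σ := fun i => {w | (f i).eval (α w) = y w}
  have hpair (i j : Fin 3) (hij : i ≠ j) : #(A i ∩ A j) < k :=
    card_lt_of_eval_index_eq (hf.ne hij) (hdeg i) (hdeg j) hα.injOn fun w hw => by
      simp only [A, mem_inter, mem_filter, mem_univ, true_and] at hw
      rw [hw.1, hw.2]
  have hunion : #(A 0 ∪ A 1 ∪ A 2) ≤ Fintype.card σ := card_le_univ _
  have hincl := card_add_card_add_card_add_card_inter_inter (A 0) (A 1) (A 2)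
  have h₀ : _ ≤ 3 * #(A 0) := hagree 0
  have h₁ : _ ≤ 3 * #(A 1) := hagree 1
  have h₂ : _ ≤ 3 * #(A 2) := hagree 2
  show IsListPattern k (A 0) (A 1) (A 2)
  exact ⟨hpair 0 1 (by decide), hpair 1 2 (by decide), hpair 0 2 (by decide), by omega⟩

theorem exists_isListPattern_of_not_listDecodable (hkn : k < n) {α : Fin n → F}
    (hα : Function.Injective α)
    (h : ¬ listDecodable (RScode F n k α) ((2 / 3) * (1 - (k : ℝ) / n)) 2) :
    ∃ A : Finset (Fin n) × Finset (Fin n) × Finset (Fin n),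
      IsListPattern k A.1 A.2.1 A.2.2 ∧ HasAgreementSets k A.1 A.2.1 A.2.2 α := by
  simp only [listDecodable, not_forall, not_le] at h
  obtain ⟨y, hy⟩ := h
  set S := {c // c ∈ RScode F n k α ∧ (hammingDist y c : ℝ) ≤ 2 / 3 * (1 - (k : ℝ) / n) * n}
  have : Finite S := Nat.finite_of_card_ne_zero (by omega)
  have := Fintype.ofFinite S
  obtain ⟨e⟩ : Nonempty (Fin 3 ↪ S) := Function.Embedding.nonempty_of_card_le (by
    rw [Fintype.card_fin, ← Nat.card_eq_fintype_card]
    exact hy)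
  have hpoly (c : S) :
      ∃ f : F[X], f.degree < k ∧ c.1 = fun w => f.eval (α w) := c.2.1
  choose p hpk hpc using hpoly
  set f := p ∘ e
  have hf : Function.Injective f := fun i j hij =>
    e.injective <| Subtype.ext <| by
      rw [hpc, hpc]
      exact congrArg (fun g : F[X] => fun w => g.eval (α w)) hij
  have hagree (i : Fin 3) : n + 2 * k ≤ 3 * #{w | (f i).eval (α w) = y w} := by
    have := le_three_mul_card_agree_of_hammingDist_le hkn (e i).2.2
    rwa [hpc] at this
  refine ⟨(_, _, _), isListPattern_of_agreement hα hf (fun i => hpk _) (by simpa using hagree),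
    hα, y, f 0, f 1, f 2, hf.ne (by decide), hpk _, hpk _, hpk _, ?_, ?_, ?_⟩ <;>
  exact fun w hw => (mem_filter.mp hw).2

open Classical in
theorem card_injective_not_listDecodable_le [Fintype F] (hkn : k < n) :
    #{α : Fin n → F | Function.Injective α ∧
        ¬ listDecodable (RScode F n k α) ((2 / 3) * (1 - (k : ℝ) / n)) 2} ≤
      2 ^ (3 * n) * k ^ 2 * Fintype.card F ^ (n - 1) := by
  refine (card_filter_le_of_forall_exists_vanishing
    {A : Finset (Fin n) × Finset (Fin n) × Finset (Fin n) | IsListPattern k A.1 A.2.1 A.2.2} (k ^ 2)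
    _ (fun A α => HasAgreementSets k A.1 A.2.1 A.2.2 α) (fun α hα => ?_)
    fun A hA => (mem_filter.mp hA).2.exists_vanishing).trans ?_
  · obtain ⟨A, hA, hαA⟩ := exists_isListPattern_of_not_listDecodable hkn hα.1 hα.2
    exact ⟨A, mem_filter.mpr ⟨mem_univ _, hA⟩, hαA⟩
  · have hcard : #{A : Finset (Fin n) × Finset (Fin n) × Finset (Fin n) |
        IsListPattern k A.1 A.2.1 A.2.2} ≤ 2 ^ (3 * n) :=
      (card_filter_le _ _).trans_eq (by simp [Fintype.card_prod, Fintype.card_finset]; ring)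
    rw [← mul_assoc]
    exact Nat.mul_le_mul_right _ (Nat.mul_le_mul_right _ hcard)

end ListDecoding

theorem stmt_6_general (n k : ℕ) (hkn : k < n)
    (F : Type*) [Field F] [Fintype F] [DecidableEq F] :
    Nat.card {α : Fin n → F // ¬ (Function.Injective α ∧
        listDecodable (RScode F n k α) ((2 / 3) * (1 - (k : ℝ) / n)) 2)} ≤
      (2 ^ (3 * n) * k ^ 2 + n ^ 2) * Fintype.card F ^ (n - 1) := by
  classical
  rw [Nat.card_eq_fintype_card, Fintype.card_subtype]
  calc _ ≤ #{α : Fin n → F | ¬ Function.Injective α ∨ (Function.Injective α ∧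
        ¬ listDecodable (RScode F n k α) ((2 / 3) * (1 - (k : ℝ) / n)) 2)} :=
        card_le_card (monotone_filter_right _ fun α h => by tauto)
    _ ≤ n ^ 2 * Fintype.card F ^ (n - 1) + 2 ^ (3 * n) * k ^ 2 * Fintype.card F ^ (n - 1) := by
        rw [filter_or]
        exact (card_union_le _ _).trans (add_le_add card_not_injective_le
          (card_injective_not_listDecodable_le hkn))
    _ = (2 ^ (3 * n) * k ^ 2 + n ^ 2) * Fintype.card F ^ (n - 1) := by ring

/-- Existence of optimal 2 list-decodable RS codes: with `c = 2^{3n}k² + n²`, all but at most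
`c·q^{n-1}` vectors `α ∈ F_q^n` have distinct coordinates and define an `[n,k]`-RS code that is
`((2/3)(1 - k/n), 2)` list-decodable. -/
theorem stmt_6 (n k : ℕ) (hk : 0 < k) (hkn : k < n)
    (F : Type*) [Field F] [Fintype F] [DecidableEq F] :
    Nat.card {α : Fin n → F // ¬ (Function.Injective α ∧
        listDecodable (RScode F n k α) ((2 / 3) * (1 - (k : ℝ) / n)) 2)} ≤
      (2 ^ (3 * n) * k ^ 2 + n ^ 2) * Fintype.card F ^ (n - 1) :=
  stmt_6_general n k hkn F
end

section
/- Let q be a power of 2 and let c_1,...,c_t be t distinct codewords of an [n,k]-RS code over F_q with evaluation vector α, corresponding to polynomials f_1,...,f_t of degree < k. Let I_1,...,I_t ⊆ [n] satisfy I_i ∩ I_j ⊆ I(c_i, c_j) (the agreement set of c_i and c_j) for all i < j. Then the vector f = (f_i + f_j : {i,j} ∈ C([t],2)) ∈ F_q^{C(t,2)k}, concatenated in lexicographic order of pairs, is a nonzero vector in the kernel of the t-wise intersection matrix M_{k,(I_1,...,I_t)}(α). -/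
/-!
In characteristic 2 we have `f_i + f_j = f_i - f_j`. Since `c_i` and `c_j` agree on
`I_i ∩ I_j`, the polynomial `f_i + f_j` vanishes at the points `α_x`, `x ∈ I_i ∩ I_j`, which is
what the Vandermonde block of the edge `{i,j}` computes. A triangle row adds up
`(f_u + f_v) + (f_u + f_w) + (f_v + f_w) = 2 (f_u + f_v + f_w) = 0`. Finally the vector is
nonzero because the first and last codewords differ, so `f_0 + f_m ≠ 0`.
-/

/-- Edges of the complete graph on `Fin t`: ordered pairs `(i,j)` with `i < j`. -/
abbrev Edge (t : ℕ) := {p : Fin t × Fin t // p.1 < p.2}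

/-- The `t`-wise intersection matrix `M_{k,(I_1,...,I_t)}` with `t = m+1` vertices:
the top rows form `B_t ⊗ I_k`, where `B_t` has one row for each triangle `Δ_{ij,last}`
(indexed by the edge `(i,j)` of `K_m`), and the bottom rows form the block-diagonal matrix
of Vandermonde blocks `V_k(I_i ∩ I_j)` over the edges `{i,j}` of `K_t`. -/
noncomputable def Mt (F : Type*) [Field F] (n m k : ℕ) (I : Fin (m + 1) → Finset (Fin n)) :
    Matrix ((Edge m × Fin k) ⊕ (Σ e : Edge (m + 1), {x : Fin n // x ∈ I e.1.1 ∩ I e.1.2}))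
      (Edge (m + 1) × Fin k) (MvPolynomial (Fin n) F) :=
  fun r c =>
    match r with
    | Sum.inl (p, a) =>
        if c.1.1.1 ∈ ({p.1.1.castSucc, p.1.2.castSucc, Fin.last m} : Finset (Fin (m + 1))) ∧
            c.1.1.2 ∈ ({p.1.1.castSucc, p.1.2.castSucc, Fin.last m} : Finset (Fin (m + 1))) ∧
            a = c.2 then 1 else 0
    | Sum.inr ⟨e, x⟩ => if e = c.1 then MvPolynomial.X x.1 ^ (c.2 : ℕ) else 0

open Polynomial Matrix

theorem Polynomial.sum_fin_pow_mul_coeff_eq_eval {R : Type*} [CommSemiring R] {p : R[X]}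
    {k : ℕ} (hp : p.degree < k) (x : R) :
    ∑ b : Fin k, x ^ (b : ℕ) * p.coeff b = p.eval x := by
  rcases eq_or_ne p 0 with rfl | hp0
  · simp
  rw [Fin.sum_univ_eq_sum_range (fun b => x ^ b * p.coeff b),
    eval_eq_sum_range' ((natDegree_lt_iff_degree_lt hp0).mpr hp)]
  exact Finset.sum_congr rfl fun _ _ => mul_comm _ _

theorem Polynomial.exists_coeff_ne_zero_of_degree_lt {R : Type*} [Semiring R] {p : R[X]}
    {k : ℕ} (hp : p.degree < k) (hp0 : p ≠ 0) : ∃ b : Fin k, p.coeff b ≠ 0 := by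
  obtain ⟨b, hb⟩ : ∃ b, p.coeff b ≠ 0 := by
    by_contra! h
    exact hp0 (Polynomial.ext h)
  refine ⟨⟨b, ?_⟩, hb⟩
  by_contra! hkb
  exact hb (coeff_eq_zero_of_degree_lt (hp.trans_le (by exact_mod_cast hkb)))

theorem Edge.sum_ite_mem_triangle {M : Type*} [AddCommMonoid M] {t : ℕ} {u v w : Fin t}
    (huv : u < v) (hvw : v < w) (g : Edge t → M) :
    ∑ e : Edge t, (if e.1.1 ∈ ({u, v, w} : Finset (Fin t)) ∧
        e.1.2 ∈ ({u, v, w} : Finset (Fin t)) then g e else 0) =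
      g ⟨(u, v), huv⟩ + g ⟨(u, w), huv.trans hvw⟩ + g ⟨(v, w), hvw⟩ := by
  have htri : Finset.univ.filter (fun e : Edge t => e.1.1 ∈ ({u, v, w} : Finset (Fin t)) ∧
        e.1.2 ∈ ({u, v, w} : Finset (Fin t))) =
      {⟨(u, v), huv⟩, ⟨(u, w), huv.trans hvw⟩, ⟨(v, w), hvw⟩} := by
    ext ⟨⟨y, z⟩, hyz⟩
    simp only [Finset.mem_filter, Finset.mem_univ, true_and, Finset.mem_insert,
      Finset.mem_singleton, Subtype.mk.injEq, Prod.mk.injEq]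
    simp only [Fin.lt_def, Fin.ext_iff] at *
    omega
  rw [← Finset.sum_filter, htri, Finset.sum_insert (by simp [hvw.ne, huv.ne]),
    Finset.sum_insert (by simp [huv.ne]), Finset.sum_singleton, add_assoc]

noncomputable def edgeSumCoeffs {R : Type*} [Semiring R] {t : ℕ} (k : ℕ) (f : Fin t → R[X]) :
    Edge t × Fin k → R :=
  fun c => (f c.1.1.1 + f c.1.1.2).coeff c.2

theorem edgeSumCoeffs_ne_zero {R : Type*} [Ring R] [CharP R 2] {t k : ℕ} {f : Fin t → R[X]}
    (hdeg : ∀ i, (f i).degree < k) {i j : Fin t} (hij : i < j) (hf : f i ≠ f j) :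
    edgeSumCoeffs k f ≠ 0 := by
  have hsum : f i + f j ≠ 0 := fun h => hf (CharTwo.add_eq_zero.mp h)
  obtain ⟨b, hb⟩ := exists_coeff_ne_zero_of_degree_lt
    ((degree_add_le _ _).trans_lt (max_lt (hdeg i) (hdeg j))) hsum
  exact fun h => hb (congrFun h (⟨(i, j), hij⟩, b))

section IntersectionMatrix

variable {F : Type*} [Field F] {n m k : ℕ} {I : Fin (m + 1) → Finset (Fin n)}

theorem Mt_eval_mulVec_inl (α : Fin n → F) (f : Edge (m + 1) × Fin k → F) (p : Edge m)
    (a : Fin k) :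
    ((Mt F n m k I).map (MvPolynomial.eval α) *ᵥ f) (Sum.inl (p, a)) =
      f (⟨(p.1.1.castSucc, p.1.2.castSucc), Fin.castSucc_lt_castSucc_iff.mpr p.2⟩, a) +
      f (⟨(p.1.1.castSucc, Fin.last m), Fin.castSucc_lt_last _⟩, a) +
      f (⟨(p.1.2.castSucc, Fin.last m), Fin.castSucc_lt_last _⟩, a) := by
  rw [← Edge.sum_ite_mem_triangle (Fin.castSucc_lt_castSucc_iff.mpr p.2)
    (Fin.castSucc_lt_last _) (fun e => f (e, a))]
  simp only [Matrix.mulVec, dotProduct, Matrix.map_apply, Mt, apply_ite (MvPolynomial.eval α),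
    map_one, map_zero, ite_mul, one_mul, zero_mul, Fintype.sum_prod_type_right]
  rw [Finset.sum_comm]
  refine Finset.sum_congr rfl fun e _ => ?_
  rw [Fintype.sum_eq_single a fun b hb => if_neg fun h => hb h.2.2.symm]
  simp only [and_true]

theorem Mt_eval_mulVec_inr (α : Fin n → F) (f : Edge (m + 1) × Fin k → F) (e : Edge (m + 1))
    (x : {x // x ∈ I e.1.1 ∩ I e.1.2}) :
    ((Mt F n m k I).map (MvPolynomial.eval α) *ᵥ f) (Sum.inr ⟨e, x⟩) =
      ∑ b : Fin k, α x ^ (b : ℕ) * f (e, b) := by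
  simp only [Matrix.mulVec, dotProduct, Matrix.map_apply, Mt, apply_ite (MvPolynomial.eval α),
    map_pow, MvPolynomial.eval_X, map_zero, ite_mul, zero_mul, Fintype.sum_prod_type_right,
    Finset.sum_ite_eq, Finset.mem_univ, if_true]

theorem Mt_eval_mulVec_edgeSumCoeffs [CharP F 2] (α : Fin n → F) {f : Fin (m + 1) → F[X]}
    (hdeg : ∀ i, (f i).degree < k)
    (hagree : ∀ i j, i < j → ∀ x ∈ I i ∩ I j, (f i).eval (α x) = (f j).eval (α x)) :
    (Mt F n m k I).map (MvPolynomial.eval α) *ᵥ edgeSumCoeffs k f = 0 := by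
  funext r
  rcases r with ⟨p, a⟩ | ⟨e, x⟩
  · rw [Mt_eval_mulVec_inl, Pi.zero_apply]
    simp only [edgeSumCoeffs, coeff_add]
    rw [show ∀ a b c : F, a + b + (a + c) + (b + c) = 2 * (a + b + c) by intros; ring,
      CharTwo.two_eq_zero, zero_mul]
  · rw [Mt_eval_mulVec_inr, Pi.zero_apply]
    simp only [edgeSumCoeffs]
    rw [sum_fin_pow_mul_coeff_eq_eval ((degree_add_le _ _).trans_lt (max_lt (hdeg _) (hdeg _))),
      eval_add, hagree _ _ e.2 x x.2, CharTwo.add_self_eq_zero]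

end IntersectionMatrix

theorem stmt_11_general (n m k : ℕ) (hm : 2 ≤ m)
    (F : Type*) [Field F] [CharP F 2]
    (α : Fin n → F)
    (fI : Fin (m + 1) → Polynomial F)
    (hdeg : ∀ i, (fI i).degree < (k : WithBot ℕ))
    (hdist : ∀ i j : Fin (m + 1), i ≠ j →
      (fun x : Fin n => (fI i).eval (α x)) ≠ fun x : Fin n => (fI j).eval (α x))
    (I : Fin (m + 1) → Finset (Fin n))
    (hagree : ∀ i j : Fin (m + 1), i ≠ j → ∀ x ∈ I i ∩ I j,
      (fI i).eval (α x) = (fI j).eval (α x)) :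
    (fun c : Edge (m + 1) × Fin k => (fI c.1.1.1 + fI c.1.1.2).coeff (c.2 : ℕ)) ≠ 0 ∧
    ((Mt F n m k I).map (MvPolynomial.eval α)).mulVec
      (fun c : Edge (m + 1) × Fin k => (fI c.1.1.1 + fI c.1.1.2).coeff (c.2 : ℕ)) = 0 := by
  have h0last : (0 : Fin (m + 1)) < Fin.last m := by
    rw [Fin.lt_def, Fin.val_zero, Fin.val_last]
    omega
  refine ⟨edgeSumCoeffs_ne_zero hdeg h0last fun h => ?_,
    Mt_eval_mulVec_edgeSumCoeffs α hdeg fun i j hij => hagree i j hij.ne⟩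
  exact hdist 0 (Fin.last m) h0last.ne (by rw [h])

/-- Lemma (codewords in a small ball give a kernel vector of the intersection matrix):
over a field of characteristic 2, if `c_1,...,c_t` are distinct codewords of an `[n,k]`-RS
code given by polynomials `f_i` of degree `< k`, and `I_i ∩ I_j` is contained in the
agreement set of `c_i` and `c_j` for all `i ≠ j`, then the concatenated vector
`(f_i + f_j : {i,j} ∈ C([t],2))` is a nonzero vector in the kernel of the evaluated
`t`-wise intersection matrix `M_{k,(I_1,...,I_t)}(α)`. (Here `t = m+1 ≥ 3`.) -/
theorem stmt_11 (n m k : ℕ) (hm : 2 ≤ m) (hk : 0 < k)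
    (F : Type*) [Field F] [Fintype F] [DecidableEq F] [CharP F 2]
    (α : Fin n → F)
    (fI : Fin (m + 1) → Polynomial F)
    (hdeg : ∀ i, (fI i).degree < (k : WithBot ℕ))
    (hdist : ∀ i j : Fin (m + 1), i ≠ j →
      (fun x : Fin n => (fI i).eval (α x)) ≠ fun x : Fin n => (fI j).eval (α x))
    (I : Fin (m + 1) → Finset (Fin n))
    (hagree : ∀ i j : Fin (m + 1), i ≠ j → ∀ x ∈ I i ∩ I j,
      (fI i).eval (α x) = (fI j).eval (α x)) :
    (fun c : Edge (m + 1) × Fin k => (fI c.1.1.1 + fI c.1.1.2).coeff (c.2 : ℕ)) ≠ 0 ∧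
    ((Mt F n m k I).map (MvPolynomial.eval α)).mulVec
      (fun c : Edge (m + 1) × Fin k => (fI c.1.1.1 + fI c.1.1.2).coeff (c.2 : ℕ)) = 0 :=
  stmt_11_general n m k hm F α fI hdeg hdist I hagree
end

section
/- Let k ≥ 1 and I_1, I_2, I_3 ⊆ [n] satisfy wt(I_J) ≤ (|J|−1)k for all nonempty J ⊆ [3], with equality wt(I_1,I_2,I_3) = 2k for J = [3]. Then the 3-wise intersection matrix M_{k,(I_1,I_2,I_3)} is nonsingular: it contains a 3k × 3k submatrix whose determinant is a nonzero polynomial in F_q[x_1,...,x_n]. -/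
/-! Write `P e = I a ∩ I b` for an edge `e = {a, b}` of the triangle and `T = I 0 ∩ I 1 ∩ I 2`.
The weight conditions give `|P e| ≤ k` and `∑ e, |P e| = 2k + |T|`, and the `P e \ T` are
pairwise disjoint.  Give every variable `x` an index `idx x < k` such that each `j < k` is
attained on at least two of the three sets `P e`: map `T` bijectively onto `[k - |T|, k)`, and
lay out the sets `P e \ T` (each of size at most `s = k - |T|`, of total size `2s`) one after
the other and reduce positions mod `s`, so that positions `j` and `j + s` fall into different
blocks.  Column `(e, j)` then takes the Vandermonde row of some `x ∈ P e` with `idx x = j`, or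
the top row `j` if there is none; as each `j` is missed by at most one edge, distinct columns
get distinct rows.

Every entry of the chosen square submatrix is `0` or a monomial, so its determinant has
coefficient `1` at the diagonal monomial `∏ X x ^ idx x` as soon as no other permutation `σ`
produces that monomial.  Applying the weight `idx` to the exponents gives
`∑ c, j (σ c) * j c = ∑ c, j c ^ 2` for the column index `j`, hence `j ∘ σ = j`, and the
nonzero entries then force `σ = 1`. -/

open Finset MvPolynomial Function

theorem MvPolynomial.det_ne_zero_of_unique_diagonal_monomial {ι σ R : Type*} [Fintype ι]
    [DecidableEq ι] [CommRing R] [Nontrivial R] (M : Matrix ι ι (MvPolynomial σ R))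
    (d : ι → ι → σ →₀ ℕ) (hM : ∀ i j, M i j ≠ 0 → M i j = monomial (d i j) 1)
    (hdiag : ∀ i, M i i ≠ 0)
    (huniq : ∀ τ : Equiv.Perm ι, (∀ i, M (τ i) i ≠ 0) → ∑ i, d (τ i) i = ∑ i, d i i → τ = 1) :
    M.det ≠ 0 := by
  classical
  have hterm : ∀ τ : Equiv.Perm ι,
      coeff (∑ i, d i i) (∏ i, M (τ i) i) = if τ = 1 then 1 else 0 := by
    intro τ
    by_cases hτ : ∀ i, M (τ i) i ≠ 0
    · rw [prod_congr rfl fun i _ => hM _ _ (hτ i), ← monomial_sum_one, coeff_monomial]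
      by_cases h1 : τ = 1
      · subst h1
        simp
      · rw [if_neg fun h => h1 (huniq τ hτ h), if_neg h1]
    · push Not at hτ
      obtain ⟨i, hi⟩ := hτ
      rw [prod_eq_zero (f := fun j => M (τ j) j) (mem_univ i) hi, coeff_zero, if_neg]
      rintro rfl
      exact hdiag i hi
  have hcoeff : coeff (∑ i, d i i) M.det = 1 := by
    simp only [Matrix.det_apply, coeff_sum, Units.smul_def, coeff_smul, hterm]
    simp
  intro h
  simp [h] at hcoeff

theorem Equiv.Perm.comp_eq_of_sum_mul_comp_eq {ι R : Type*} [Fintype ι] [CommRing R]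
    [LinearOrder R] [IsStrictOrderedRing R] (τ : Equiv.Perm ι) (f : ι → R)
    (h : ∑ i, f (τ i) * f i = ∑ i, f i * f i) : f ∘ τ = f := by
  have hsq : ∑ i, (f (τ i) - f i) ^ 2 = 0 :=
    calc ∑ i, (f (τ i) - f i) ^ 2
        = ∑ i, f (τ i) * f (τ i) + ∑ i, f i * f i - 2 * ∑ i, f (τ i) * f i := by
          rw [mul_sum, ← sum_add_distrib, ← sum_sub_distrib]
          exact sum_congr rfl fun i _ => by ring
      _ = 0 := by
          rw [Equiv.sum_comp τ fun i => f i * f i, h]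
          ring
  funext i
  have := (sum_eq_zero_iff_of_nonneg fun i _ => sq_nonneg (f (τ i) - f i)).1 hsq i (mem_univ i)
  exact sub_eq_zero.1 (pow_eq_zero_iff two_ne_zero |>.1 this)

theorem Finset.card_union_three_add_card_inter {α : Type*} [DecidableEq α] (A B C : Finset α) :
    #(A ∪ B ∪ C) + #(A ∩ B) + #(A ∩ C) + #(B ∩ C) = #A + #B + #C + #(A ∩ B ∩ C) := by
  have hAB := card_union_add_card_inter A B
  have hABC := card_union_add_card_inter (A ∪ B) C
  have hC := card_union_add_card_inter (A ∩ C) (B ∩ C)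
  rw [union_inter_distrib_right] at hABC
  rw [inter_inter_inter_comm, inter_self] at hC
  omega

theorem pairs_meet_of_card_eq_three {ι : Type*} [Fintype ι] (h3 : Fintype.card ι = 3)
    {e e' f f' : ι} (he : e ≠ e') (hf : f ≠ f') : e = f ∨ e = f' ∨ e' = f ∨ e' = f' := by
  classical
  have hunion := card_union_add_card_inter {e, e'} {f, f'}
  have := card_le_univ ({e, e'} ∪ {f, f'})
  rw [card_pair he, card_pair hf] at hunion
  obtain ⟨x, hx⟩ : ({e, e'} ∩ {f, f'} : Finset ι).Nonempty := by
    rw [← card_pos]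
    omega
  simp only [mem_inter, mem_insert, mem_singleton] at hx
  rcases hx with ⟨rfl | rfl, rfl | rfl⟩ <;> tauto

theorem exists_index_attained_on_two_blocks {α : Type*} {m : ℕ} (D : Fin m → Finset α)
    (hD : Pairwise (Disjoint on D)) (s : ℕ) (hle : ∀ i, #(D i) ≤ s)
    (hsum : 2 * s ≤ ∑ i, #(D i)) :
    ∃ φ : α → ℕ, ∀ j < s, ∃ i i', i ≠ i' ∧ (∃ x ∈ D i, φ x = j) ∧ (∃ x ∈ D i', φ x = j) := by
  let E : (Σ i, Fin #(D i)) → α := fun p => ((D p.1).equivFin.symm p.2 : α)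
  have hE_mem : ∀ p, E p ∈ D p.1 := fun p => ((D p.1).equivFin.symm p.2).2
  have hE : Injective E := by
    rintro ⟨i, a⟩ ⟨i', b⟩ h
    obtain rfl : i = i' := by
      by_contra hne
      exact disjoint_left.1 (hD hne) (hE_mem ⟨i, a⟩) (h ▸ hE_mem ⟨i', b⟩)
    simpa [E, Subtype.ext_iff.symm] using h
  -- `finSigmaFinEquiv` lays the blocks out consecutively, so within one block positions
  -- differ by less than `s`.
  have hpos : ∀ (i : Fin m) (a b : Fin #(D i)),
      (finSigmaFinEquiv (n := fun i => #(D i)) ⟨i, a⟩ : ℕ) + b =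
        finSigmaFinEquiv (n := fun i => #(D i)) ⟨i, b⟩ + a := by
    intro i a b
    simp only [finSigmaFinEquiv_apply]
    omega
  refine ⟨extend E (fun p => (finSigmaFinEquiv p : ℕ) % s) 0, fun j hj => ?_⟩
  obtain ⟨⟨i, a⟩, ha⟩ := finSigmaFinEquiv.surjective (⟨j, by omega⟩ : Fin (∑ i, #(D i)))
  obtain ⟨⟨i', b⟩, hb⟩ := finSigmaFinEquiv.surjective (⟨j + s, by omega⟩ : Fin (∑ i, #(D i)))
  refine ⟨i, i', ?_, ⟨E ⟨i, a⟩, hE_mem _, ?_⟩, ⟨E ⟨i', b⟩, hE_mem _, ?_⟩⟩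
  · rintro rfl
    have hab := hpos i a b
    rw [ha, hb] at hab
    dsimp only at hab
    have := hle i
    omega
  · rw [hE.extend_apply, ha]
    exact Nat.mod_eq_of_lt hj
  · rw [hE.extend_apply, hb, Nat.add_mod_right, Nat.mod_eq_of_lt hj]

theorem exists_index_attained_on_two_of_three {α : Type*} [DecidableEq α]
    (P : Edge 3 → Finset α) (T : Finset α) (k : ℕ) (hTP : ∀ e, T ⊆ P e)
    (hPT : ∀ e e', e ≠ e' → P e ∩ P e' ⊆ T) (hP : ∀ e, #(P e) ≤ k)
    (hsum : 2 * k + #T ≤ ∑ e, #(P e)) :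
    ∃ idx : α → ℕ, ∀ j < k, ∀ e e', e ≠ e' →
      (∃ x ∈ P e, idx x = j) ∨ (∃ x ∈ P e', idx x = j) := by
  set s := k - #T
  have hcard : Fintype.card (Edge 3) = 3 := rfl
  let D e := P e \ T
  have hD : Pairwise (Disjoint on D) := fun e e' he =>
    disjoint_left.2 fun x hx hx' => (mem_sdiff.1 hx).2 <|
      hPT e e' he (mem_inter.2 ⟨(mem_sdiff.1 hx).1, (mem_sdiff.1 hx').1⟩)
  have hDcard : ∀ e, #(D e) + #T = #(P e) := fun e => card_sdiff_add_card_eq_card (hTP e)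
  have hDsum : ∑ e, #(D e) + 3 * #T = ∑ e, #(P e) := by
    rw [← sum_congr rfl fun e _ => hDcard e, sum_add_distrib, sum_const, card_univ, hcard,
      smul_eq_mul]
  let ε : Fin 3 ≃ Edge 3 := (Fintype.equivFinOfCardEq hcard).symm
  have hDle : ∀ i, #(D (ε i)) ≤ s := fun i => by
    have := hDcard (ε i)
    have := hP (ε i)
    omega
  have hDsum' : 2 * s ≤ ∑ i, #(D (ε i)) := by
    rw [Equiv.sum_comp ε fun e => #(D e)]
    have := hP (ε 0)
    have := hDcard (ε 0)
    omega
  obtain ⟨φ, hφ⟩ := exists_index_attained_on_two_blocks (D ∘ ε)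
    (fun i i' h => hD (ε.injective.ne h)) s hDle hDsum'
  let idx x := if h : x ∈ T then s + (T.equivFin ⟨x, h⟩ : ℕ) else φ x
  refine ⟨idx, fun j hj e e' hee => ?_⟩
  by_cases hjs : j < s
  · obtain ⟨i, i', hii, hi, hi'⟩ := hφ j hjs
    have hattained : ∀ i, (∃ x ∈ D (ε i), φ x = j) → ∃ x ∈ P (ε i), idx x = j := by
      rintro i ⟨x, hx, rfl⟩
      exact ⟨x, (mem_sdiff.1 hx).1, dif_neg (mem_sdiff.1 hx).2⟩
    rcases pairs_meet_of_card_eq_three hcard hee (ε.injective.ne hii) with h | h | h | h <;>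
      rw [h] <;> first | exact Or.inl (hattained _ ‹_›) | exact Or.inr (hattained _ ‹_›)
  · refine Or.inl ⟨T.equivFin.symm ⟨j - s, by omega⟩, hTP e (coe_mem _), ?_⟩
    simp only [idx, coe_mem, dif_pos, Subtype.coe_eta, Equiv.apply_symm_apply]
    omega

theorem sum_edge_three {M : Type*} [AddCommMonoid M] (f : Edge 3 → M) :
    ∑ e, f e = f ⟨(0, 1), by decide⟩ + f ⟨(0, 2), by decide⟩ + f ⟨(1, 2), by decide⟩ := by
  rw [show (univ : Finset (Edge 3)) =
      {⟨(0, 1), by decide⟩, ⟨(0, 2), by decide⟩, ⟨(1, 2), by decide⟩} by decide,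
    sum_insert (by decide), sum_insert (by decide), sum_singleton, add_assoc]

theorem inter_three_subset_edge {α : Type*} [DecidableEq α] (I : Fin 3 → Finset α)
    (e : Edge 3) : I 0 ∩ I 1 ∩ I 2 ⊆ I e.1.1 ∩ I e.1.2 := by
  intro x hx
  have hall : ∀ v, x ∈ I v := by simpa [Fin.forall_fin_succ, and_assoc] using hx
  exact mem_inter.2 ⟨hall _, hall _⟩

theorem edge_inter_edge_subset {α : Type*} [DecidableEq α] (I : Fin 3 → Finset α)
    {e e' : Edge 3} (he : e ≠ e') :
    (I e.1.1 ∩ I e.1.2) ∩ (I e'.1.1 ∩ I e'.1.2) ⊆ I 0 ∩ I 1 ∩ I 2 := by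
  have hcover := (by decide : ∀ e e' : Edge 3, e ≠ e' → ∀ v : Fin 3,
      v = e.1.1 ∨ v = e.1.2 ∨ v = e'.1.1 ∨ v = e'.1.2) e e' he
  intro x hx
  simp only [mem_inter] at hx
  have hall : ∀ v, x ∈ I v := fun v => by
    rcases hcover v with rfl | rfl | rfl | rfl <;> tauto
  simpa [Fin.forall_fin_succ, and_assoc] using hall

theorem card_inter_le_of_pair_weight_le {α : Type*} [DecidableEq α] {I : Fin 3 → Finset α}
    {k : ℕ} {i j : Fin 3} (hij : i ≠ j)
    (hwt : (∑ v ∈ {i, j}, ((I v).card : ℤ)) - (({i, j} : Finset (Fin 3)).biUnion I).card ≤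
      ((({i, j} : Finset (Fin 3)).card : ℤ) - 1) * k) :
    #(I i ∩ I j) ≤ k := by
  rw [sum_pair hij, card_pair hij, biUnion_insert, singleton_biUnion] at hwt
  have := card_union_add_card_inter (I i) (I j)
  push_cast at hwt
  omega

namespace Mt

variable {n k : ℕ}

theorem inl_apply (F : Type*) [Field F] (I : Fin 3 → Finset (Fin n)) (p : Edge 2) (a : Fin k)
    (c : Edge 3 × Fin k) : Mt F n 2 k I (Sum.inl (p, a)) c = if a = c.2 then 1 else 0 := by
  have hmem : ∀ (q : Edge 2) (v : Fin 3),
      v ∈ ({q.1.1.castSucc, q.1.2.castSucc, Fin.last 2} : Finset (Fin 3)) := by decide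
  simp only [Mt, hmem, true_and]

def IndexAttained (I : Fin 3 → Finset (Fin n)) (idx : Fin n → ℕ) (c : Edge 3 × Fin k) : Prop :=
  ∃ x ∈ I c.1.1.1 ∩ I c.1.1.2, idx x = c.2

open Classical in
noncomputable def selectRow (I : Fin 3 → Finset (Fin n)) (idx : Fin n → ℕ)
    (c : Edge 3 × Fin k) :
    (Edge 2 × Fin k) ⊕ (Σ e : Edge 3, {x : Fin n // x ∈ I e.1.1 ∩ I e.1.2}) :=
  if h : IndexAttained I idx c then Sum.inr ⟨c.1, h.choose, h.choose_spec.1⟩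
  else Sum.inl (⟨(0, 1), Fin.zero_lt_one⟩, c.2)

open Classical in
noncomputable def selectedExponent (I : Fin 3 → Finset (Fin n)) (idx : Fin n → ℕ)
    (r c : Edge 3 × Fin k) : Fin n →₀ ℕ :=
  if h : IndexAttained I idx r then Finsupp.single h.choose c.2 else 0

variable {I : Fin 3 → Finset (Fin n)} {idx : Fin n → ℕ}

open Classical in
theorem weight_selectedExponent (r c : Edge 3 × Fin k) :
    Finsupp.weight idx (selectedExponent I idx r c) =
      if IndexAttained I idx r then (r.2 : ℕ) * c.2 else 0 := by
  unfold selectedExponent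
  split_ifs with hr
  · rw [Finsupp.weight_single, hr.choose_spec.2, smul_eq_mul, mul_comm]
  · exact map_zero _

theorem selectRow_injective
    (hcover : ∀ (j : Fin k) (e e' : Edge 3), e ≠ e' →
      IndexAttained I idx (e, j) ∨ IndexAttained I idx (e', j)) :
    Injective (selectRow (k := k) I idx) := by
  rintro ⟨e, j⟩ ⟨e', j'⟩ h
  by_cases hc : IndexAttained I idx (e, j) <;> by_cases hc' : IndexAttained I idx (e', j')
  · simp only [selectRow, dif_pos hc, dif_pos hc', Sum.inr.injEq, Sigma.mk.inj_iff] at h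
    obtain ⟨rfl, hx⟩ := h
    have hx : hc.choose = hc'.choose := congrArg Subtype.val (eq_of_heq hx)
    have hj : (j : ℕ) = j' := by rw [← hc.choose_spec.2, ← hc'.choose_spec.2, hx]
    exact Prod.ext rfl (Fin.ext hj)
  · simp [selectRow, hc, hc'] at h
  · simp [selectRow, hc, hc'] at h
  · simp only [selectRow, dif_neg hc, dif_neg hc', Sum.inl.injEq, Prod.mk.injEq, true_and] at h
    subst h
    refine Prod.ext ?_ rfl
    by_contra hne
    exact (hcover j e e' hne).elim hc hc'

variable (F : Type*) [Field F]

theorem apply_selectRow_of_attained {r : Edge 3 × Fin k} (h : IndexAttained I idx r)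
    (c : Edge 3 × Fin k) :
    Mt F n 2 k I (selectRow I idx r) c = if r.1 = c.1 then X h.choose ^ (c.2 : ℕ) else 0 := by
  simp only [selectRow, dif_pos h]
  rfl

theorem apply_selectRow_of_not_attained {r : Edge 3 × Fin k} (h : ¬IndexAttained I idx r)
    (c : Edge 3 × Fin k) : Mt F n 2 k I (selectRow I idx r) c = if r.2 = c.2 then 1 else 0 := by
  simp only [selectRow, dif_neg h, inl_apply]

theorem fst_eq_of_apply_selectRow_ne_zero {r c : Edge 3 × Fin k} (hr : IndexAttained I idx r)
    (h : Mt F n 2 k I (selectRow I idx r) c ≠ 0) : r.1 = c.1 := by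
  rw [apply_selectRow_of_attained F hr] at h
  by_contra hne
  exact h (if_neg hne)

theorem snd_eq_of_apply_selectRow_ne_zero {r c : Edge 3 × Fin k} (hr : ¬IndexAttained I idx r)
    (h : Mt F n 2 k I (selectRow I idx r) c ≠ 0) : r.2 = c.2 := by
  rw [apply_selectRow_of_not_attained F hr] at h
  by_contra hne
  exact h (if_neg hne)

theorem apply_selectRow_eq_monomial {r c : Edge 3 × Fin k}
    (h : Mt F n 2 k I (selectRow I idx r) c ≠ 0) :
    Mt F n 2 k I (selectRow I idx r) c = monomial (selectedExponent I idx r c) 1 := by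
  by_cases hr : IndexAttained I idx r
  · rw [apply_selectRow_of_attained F hr, if_pos (fst_eq_of_apply_selectRow_ne_zero F hr h),
      selectedExponent, dif_pos hr, X_pow_eq_monomial]
  · rw [apply_selectRow_of_not_attained F hr, if_pos (snd_eq_of_apply_selectRow_ne_zero F hr h),
      selectedExponent, dif_neg hr, monomial_zero', C_1]

theorem apply_selectRow_self_ne_zero (c : Edge 3 × Fin k) :
    Mt F n 2 k I (selectRow I idx c) c ≠ 0 := by
  by_cases hc : IndexAttained I idx c
  · rw [apply_selectRow_of_attained F hc, if_pos rfl]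
    exact pow_ne_zero _ (X_ne_zero _)
  · rw [apply_selectRow_of_not_attained F hc, if_pos rfl]
    exact one_ne_zero

theorem sum_snd_mul_snd_eq_of_sum_selectedExponent_eq (τ : Equiv.Perm (Edge 3 × Fin k))
    (hτ : ∀ c, Mt F n 2 k I (selectRow I idx (τ c)) c ≠ 0)
    (hsum : ∑ c, selectedExponent I idx (τ c) c =
      ∑ c : Edge 3 × Fin k, selectedExponent I idx c c) :
    ∑ c, ((τ c).2 : ℕ) * c.2 = ∑ c : Edge 3 × Fin k, (c.2 : ℕ) * c.2 := by
  classical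
  have hweight := congrArg (Finsupp.weight idx) hsum
  simp only [map_sum, weight_selectedExponent] at hweight
  let g : Edge 3 × Fin k → ℕ := fun r => if IndexAttained I idx r then 0 else r.2 * r.2
  have hsplit : ∀ r c : Edge 3 × Fin k, (r.2 = c.2 ∨ IndexAttained I idx r) →
      (r.2 : ℕ) * c.2 = (if IndexAttained I idx r then (r.2 : ℕ) * c.2 else 0) + g r := by
    rintro r c (h | h) <;> by_cases hr : IndexAttained I idx r <;> simp_all [g]
  calc ∑ c, ((τ c).2 : ℕ) * c.2
      = ∑ c, (if IndexAttained I idx (τ c) then ((τ c).2 : ℕ) * c.2 else 0) +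
          ∑ c, g (τ c) := by
        rw [← sum_add_distrib]
        refine sum_congr rfl fun c _ => hsplit _ _ ?_
        by_cases h : IndexAttained I idx (τ c)
        · exact Or.inr h
        · exact Or.inl (snd_eq_of_apply_selectRow_ne_zero F h (hτ c))
    _ = ∑ c, (if IndexAttained I idx c then (c.2 : ℕ) * c.2 else 0) + ∑ c, g c := by
        rw [hweight, Equiv.sum_comp τ g]
    _ = ∑ c : Edge 3 × Fin k, (c.2 : ℕ) * c.2 := by
        rw [← sum_add_distrib]
        exact sum_congr rfl fun c _ => (hsplit c c (Or.inl rfl)).symm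

theorem perm_eq_one_of_sum_selectedExponent_eq
    (hcover : ∀ (j : Fin k) (e e' : Edge 3), e ≠ e' →
      IndexAttained I idx (e, j) ∨ IndexAttained I idx (e', j))
    (τ : Equiv.Perm (Edge 3 × Fin k)) (hτ : ∀ c, Mt F n 2 k I (selectRow I idx (τ c)) c ≠ 0)
    (hsum : ∑ c, selectedExponent I idx (τ c) c =
      ∑ c : Edge 3 × Fin k, selectedExponent I idx c c) :
    τ = 1 := by
  have hsnd : ∀ c, (τ c).2 = c.2 := by
    have := τ.comp_eq_of_sum_mul_comp_eq (fun c => ((c.2 : ℕ) : ℤ))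
      (by exact_mod_cast sum_snd_mul_snd_eq_of_sum_selectedExponent_eq F τ hτ hsum)
    exact fun c => Fin.ext (by simpa using congrFun this c)
  have hfix : ∀ c, IndexAttained I idx (τ c) → τ c = c := fun c hc =>
    Prod.ext (fst_eq_of_apply_selectRow_ne_zero F hc (hτ c)) (hsnd c)
  refine Equiv.ext fun c => ?_
  by_cases hc : IndexAttained I idx c
  · have := hfix (τ.symm c) (by rwa [τ.apply_symm_apply])
    rw [τ.apply_symm_apply] at this
    exact (congrArg τ this).trans (τ.apply_symm_apply c)
  · by_cases hτc : IndexAttained I idx (τ c)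
    · exact hfix c hτc
    · refine Prod.ext ?_ (hsnd c)
      by_contra hne
      rcases hcover c.2 c.1 (τ c).1 (Ne.symm hne) with h | h
      · exact hc h
      · rw [← hsnd c] at h
        exact hτc h

theorem det_submatrix_selectRow_ne_zero
    (hcover : ∀ (j : Fin k) (e e' : Edge 3), e ≠ e' →
      IndexAttained I idx (e, j) ∨ IndexAttained I idx (e', j)) :
    ((Mt F n 2 k I).submatrix (selectRow I idx) id).det ≠ 0 :=
  det_ne_zero_of_unique_diagonal_monomial _ (selectedExponent I idx)
    (fun _ _ h => apply_selectRow_eq_monomial F h) (apply_selectRow_self_ne_zero F)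
    (perm_eq_one_of_sum_selectedExponent_eq F hcover)

end Mt

open Mt in
theorem stmt_14_general (F : Type*) [Field F] (n k : ℕ)
    (I : Fin 3 → Finset (Fin n))
    (hwt : ∀ J : Finset (Fin 3), J.Nonempty →
      (∑ j ∈ J, ((I j).card : ℤ)) - ((J.biUnion I).card : ℤ) ≤ ((J.card : ℤ) - 1) * k)
    (heq : (∑ j, ((I j).card : ℤ)) - ((Finset.univ.biUnion I).card : ℤ) = 2 * k) :
    ∃ f : (Edge 3 × Fin k) →
        ((Edge 2 × Fin k) ⊕ (Σ e : Edge 3, {x : Fin n // x ∈ I e.1.1 ∩ I e.1.2})),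
      Function.Injective f ∧ ((Mt F n 2 k I).submatrix f id).det ≠ 0 := by
  have hU : univ.biUnion I = I 0 ∪ I 1 ∪ I 2 := by
    ext x
    simp [Fin.exists_fin_succ]
  have hsum : 2 * k + #(I 0 ∩ I 1 ∩ I 2) ≤ ∑ e : Edge 3, #(I e.1.1 ∩ I e.1.2) := by
    have := card_union_three_add_card_inter (I 0) (I 1) (I 2)
    rw [Fin.sum_univ_three, hU] at heq
    rw [sum_edge_three]
    dsimp only
    omega
  obtain ⟨idx, hidx⟩ := exists_index_attained_on_two_of_three
    (fun e : Edge 3 => I e.1.1 ∩ I e.1.2) (I 0 ∩ I 1 ∩ I 2) k (inter_three_subset_edge I)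
    (fun _ _ => edge_inter_edge_subset I)
    (fun e => card_inter_le_of_pair_weight_le e.2.ne (hwt _ (insert_nonempty _ _))) hsum
  have hcover : ∀ (j : Fin k) (e e' : Edge 3), e ≠ e' →
      IndexAttained I idx (e, j) ∨ IndexAttained I idx (e', j) := fun j => hidx j j.2
  exact ⟨selectRow I idx, selectRow_injective hcover, det_submatrix_selectRow_ne_zero F hcover⟩

/-- Nonsingularity of 3-wise intersection matrices: if `wt(I_J) ≤ (|J|−1)k` for every
nonempty `J ⊆ [3]`, with equality `wt(I_1,I_2,I_3) = 2k` for `J = [3]`, then the 3-wise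
intersection matrix `M_{k,(I_1,I_2,I_3)}` contains a `3k × 3k` submatrix whose determinant
is a nonzero polynomial. (Here the matrix is `Mt` with `m = 2`, i.e. `t = 3`.) -/
theorem stmt_14 (F : Type*) [Field F] (n k : ℕ) (hk : 1 ≤ k)
    (I : Fin 3 → Finset (Fin n))
    (hwt : ∀ J : Finset (Fin 3), J.Nonempty →
      (∑ j ∈ J, ((I j).card : ℤ)) - ((J.biUnion I).card : ℤ) ≤ ((J.card : ℤ) - 1) * k)
    (heq : (∑ j, ((I j).card : ℤ)) - ((Finset.univ.biUnion I).card : ℤ) = 2 * k) :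
    ∃ f : (Edge 3 × Fin k) →
        ((Edge 2 × Fin k) ⊕ (Σ e : Edge 3, {x : Fin n // x ∈ I e.1.1 ∩ I e.1.2})),
      Function.Injective f ∧ ((Mt F n 2 k I).submatrix f id).det ≠ 0 :=
  stmt_14_general F n k I hwt heq
end

section
/- Let n > k and let C be an [n,k]-RS code over F_q (q a power of 2) with evaluation vector α that is not ((L/(L+1))(1 − k/n), L) list-decodable for some L ≥ 2. Then there exist t with 3 ≤ t ≤ L+1 and subsets I_1,...,I_t ⊆ [n] such that (1) wt(I_J) ≤ (|J|−1)k for every nonempty J ⊆ [t], (2) wt(I_{[t]}) = (t−1)k, and (3) the evaluated t-wise intersection matrix M_{k,(I_1,...,I_t)}(α) does not have full column rank. -/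
/-!
Take a centre `y` and `L + 1` distinct codewords `f_i` in the ball, with agreement sets `A_i`.
The radius is chosen so that `∑ |A_i| ≥ n + Lk`, hence `wt(A_{[L+1]}) ≥ Lk`, while two distinct
polynomials of degree `< k` agree on fewer than `k` points, i.e. `wt(A_{i,j}) < k`. So an
inclusion-minimal `J` with `|J| ≥ 2` and `wt(A_J) ≥ (|J| - 1)k` has `|J| ≥ 3`, and every proper
`J' ⊂ J` with `|J'| ≥ 2` has `wt(A_J') < (|J'| - 1)k`. Deleting a point shared by two of the sets
lowers `wt(A_J)` by exactly one and raises no weight, so the `A_j` can be shrunk until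
`wt(A_J) = (|J| - 1)k`. Finally, in characteristic 2, the vector whose `{i,j}`-block is the
coefficient vector of `f_i + f_j` is a nonzero kernel vector of the intersection matrix: around a
triangle the three blocks add up to `2(f_i + f_j + f_l) = 0`, and on `I_i ∩ I_j` the polynomial
`f_i + f_j` takes the value `2y = 0`.
-/

open Finset Polynomial

section FamilyWeight

variable {ι X : Type*} [DecidableEq X]

/-- The paper's `wt(I_J)`. -/
def familyWeight (I : ι → Finset X) (J : Finset ι) : ℤ :=
  ∑ j ∈ J, ((I j).card : ℤ) - (J.biUnion I).card

theorem sum_card_eq_sum_card_filter_mem (I : ι → Finset X) (J : Finset ι) :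
    ∑ j ∈ J, #(I j) = ∑ x ∈ J.biUnion I, #{j ∈ J | x ∈ I j} := by
  simp only [card_eq_sum_ones]
  exact sum_comm' fun j x => by simp only [mem_biUnion, mem_filter]; grind

theorem familyWeight_eq_sum (I : ι → Finset X) (J : Finset ι) :
    familyWeight I J = ∑ x ∈ J.biUnion I, ((#{j ∈ J | x ∈ I j} : ℤ) - 1) := by
  rw [familyWeight, sum_sub_distrib, ← Nat.cast_sum, ← Nat.cast_sum,
    sum_card_eq_sum_card_filter_mem]
  simp

theorem one_le_card_filter_mem {I : ι → Finset X} {J : Finset ι} {x : X}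
    (hx : x ∈ J.biUnion I) : 1 ≤ #{j ∈ J | x ∈ I j} := by
  obtain ⟨j, hj, hxj⟩ := mem_biUnion.mp hx
  exact card_pos.mpr ⟨j, mem_filter.mpr ⟨hj, hxj⟩⟩

theorem familyWeight_mono {I I' : ι → Finset X} (hI : I' ≤ I) (J : Finset ι) :
    familyWeight I' J ≤ familyWeight I J := by
  rw [familyWeight_eq_sum, familyWeight_eq_sum]
  calc ∑ x ∈ J.biUnion I', ((#{j ∈ J | x ∈ I' j} : ℤ) - 1)
      ≤ ∑ x ∈ J.biUnion I', ((#{j ∈ J | x ∈ I j} : ℤ) - 1) := by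
        gcongr with x _ j
        exact hI j
    _ ≤ ∑ x ∈ J.biUnion I, ((#{j ∈ J | x ∈ I j} : ℤ) - 1) := by
        refine sum_le_sum_of_subset_of_nonneg (biUnion_mono fun j _ => hI j) fun x hx _ => ?_
        have := one_le_card_filter_mem hx
        omega

theorem familyWeight_eq_zero_of_pairwiseDisjoint {I : ι → Finset X} {J : Finset ι}
    (h : (J : Set ι).PairwiseDisjoint I) : familyWeight I J = 0 := by
  rw [familyWeight, card_biUnion h]
  simp

theorem familyWeight_update_erase [DecidableEq ι] {I : ι → Finset X} {J : Finset ι} {i j : ι}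
    {x : X} (hi : i ∈ J) (hj : j ∈ J) (hij : i ≠ j) (hxi : x ∈ I i) (hxj : x ∈ I j) :
    familyWeight (Function.update I i ((I i).erase x)) J = familyWeight I J - 1 := by
  have hunion : J.biUnion (Function.update I i ((I i).erase x)) = J.biUnion I := by
    ext z
    simp only [mem_biUnion, Function.update_apply]
    grind
  have hsum : ∑ l ∈ J, (#(Function.update I i ((I i).erase x) l) : ℤ)
      = ∑ l ∈ J, (#(I l) : ℤ) - 1 := by
    rw [← add_sum_erase _ _ hi, ← add_sum_erase _ _ hi, Function.update_self,
      card_erase_of_mem hxi, Nat.cast_sub (card_pos.mpr ⟨x, hxi⟩),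
      sum_congr rfl fun l hl => by rw [Function.update_of_ne (ne_of_mem_erase hl)]]
    ring
  rw [familyWeight, familyWeight, hunion, hsum]
  ring

theorem exists_mem_inter_of_familyWeight_pos {I : ι → Finset X} {J : Finset ι}
    (h : 0 < familyWeight I J) :
    ∃ i ∈ J, ∃ j ∈ J, i ≠ j ∧ ∃ x, x ∈ I i ∧ x ∈ I j := by
  by_contra hcon
  refine h.ne' (familyWeight_eq_zero_of_pairwiseDisjoint fun i hi j hj hij => ?_)
  exact not_not.mp fun hnd => hcon ⟨i, hi, j, hj, hij, not_disjoint_iff.mp hnd⟩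

theorem exists_le_familyWeight_eq [DecidableEq ι] (I : ι → Finset X) (J : Finset ι) {t : ℤ}
    (ht : 0 ≤ t) (h : t ≤ familyWeight I J) : ∃ I' ≤ I, familyWeight I' J = t := by
  obtain ⟨d, hd⟩ : ∃ d : ℕ, familyWeight I J = t + d :=
    ⟨(familyWeight I J - t).toNat, by omega⟩
  clear h
  induction d generalizing I with
  | zero => exact ⟨I, le_rfl, by simpa using hd⟩
  | succ d ih =>
    obtain ⟨i, hi, j, hj, hij, x, hxi, hxj⟩ :=
      exists_mem_inter_of_familyWeight_pos (by omega : 0 < familyWeight I J)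
    obtain ⟨I', hI', hI't⟩ := ih (Function.update I i ((I i).erase x))
      (by rw [familyWeight_update_erase hi hj hij hxi hxj, hd]; push_cast; ring)
    exact ⟨I', hI'.trans (update_le_iff.2 ⟨erase_subset _ _, fun _ _ => le_rfl⟩), hI't⟩

@[simp]
theorem familyWeight_singleton (I : ι → Finset X) (j : ι) : familyWeight I {j} = 0 := by
  simp [familyWeight]

theorem familyWeight_pair [DecidableEq ι] (I : ι → Finset X) {i j : ι} (hij : i ≠ j) :
    familyWeight I {i, j} = #(I i ∩ I j) := by
  rw [familyWeight, sum_pair hij, biUnion_insert, singleton_biUnion]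
  have := card_union_add_card_inter (I i) (I j)
  omega

theorem familyWeight_comp_embedding {κ : Type*} (I : ι → Finset X) (σ : κ ↪ ι)
    (J : Finset κ) :
    familyWeight (I ∘ σ) J = familyWeight I (J.map σ) := by
  have : (J.map σ).biUnion I = J.biUnion (I ∘ σ) := by
    ext x
    simp
  rw [familyWeight, familyWeight, sum_map, this]
  rfl

theorem exists_tight_subfamily [DecidableEq ι] (I : ι → Finset X) {k : ℕ} {J₀ : Finset ι}
    (hpair : ∀ i ∈ J₀, ∀ j ∈ J₀, i ≠ j → #(I i ∩ I j) < k) (hJ₀ : 2 ≤ #J₀)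
    (hwt : (#J₀ - 1 : ℤ) * k ≤ familyWeight I J₀) :
    ∃ J ⊆ J₀, 3 ≤ #J ∧ ∃ I' ≤ I,
      (∀ J' ⊆ J, J'.Nonempty → familyWeight I' J' ≤ (#J' - 1 : ℤ) * k) ∧
      familyWeight I' J = (#J - 1 : ℤ) * k := by
  obtain ⟨J, hJJ₀, ⟨hJ2, hJwt⟩, hJmin⟩ := exists_minimal_le_of_wellFoundedLT
    (fun J : Finset ι => 2 ≤ #J ∧ (#J - 1 : ℤ) * k ≤ familyWeight I J) J₀
    ⟨hJ₀, hwt⟩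
  have hJ3 : 3 ≤ #J := by
    by_contra! hlt
    obtain ⟨i, j, hij, rfl⟩ := card_eq_two.mp (by omega : #J = 2)
    have := hpair i (hJJ₀ (mem_insert_self i {j})) j (hJJ₀ (by simp)) hij
    rw [familyWeight_pair I hij, card_pair hij] at hJwt
    omega
  obtain ⟨I', hI'I, hI'J⟩ := exists_le_familyWeight_eq I J
    (mul_nonneg (by omega) (Nat.cast_nonneg k)) hJwt
  refine ⟨J, hJJ₀, hJ3, I', hI'I, fun J' hJ'J hJ' => ?_, hI'J⟩
  rcases hJ'J.eq_or_ssubset with rfl | hJ'J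
  · exact hI'J.le
  rcases (Nat.one_le_iff_ne_zero.mpr hJ'.card_ne_zero).eq_or_lt with hJ'1 | hJ'2
  · obtain ⟨j, rfl⟩ := card_eq_one.mp hJ'1.symm
    rw [familyWeight_singleton, card_singleton]
    simp
  · refine (familyWeight_mono hI'I J').trans (le_of_not_ge fun h => ?_)
    exact hJ'J.not_subset (hJmin ⟨hJ'2, h⟩ hJ'J.subset)

theorem exists_tight_family_fin [LinearOrder ι] (I : ι → Finset X) {k : ℕ} {J₀ : Finset ι}
    (hpair : ∀ i ∈ J₀, ∀ j ∈ J₀, i ≠ j → #(I i ∩ I j) < k) (hJ₀ : 2 ≤ #J₀)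
    (hwt : (#J₀ - 1 : ℤ) * k ≤ familyWeight I J₀) :
    ∃ m, 2 ≤ m ∧ m + 1 ≤ #J₀ ∧ ∃ σ : Fin (m + 1) ↪ ι, ∃ I' ≤ I,
      (∀ J : Finset (Fin (m + 1)), J.Nonempty →
        familyWeight (I' ∘ σ) J ≤ (#J - 1 : ℤ) * k) ∧
      familyWeight (I' ∘ σ) univ = (m * k : ℤ) := by
  obtain ⟨J, hJJ₀, hJ3, I', hI'I, hsub, htight⟩ := exists_tight_subfamily I hpair hJ₀ hwt
  obtain ⟨m, hm⟩ : ∃ m, #J = m + 1 := ⟨#J - 1, by omega⟩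
  let σ := (J.orderEmbOfFin hm).toEmbedding
  have hσ : univ.map σ = J := coe_injective (by simp [σ])
  refine ⟨m, by omega, hm ▸ card_le_card hJJ₀, σ, I', hI'I, fun J' hJ' => ?_, ?_⟩
  · rw [familyWeight_comp_embedding, ← card_map σ]
    exact hsub _ (hσ ▸ map_subset_map.mpr (subset_univ J')) hJ'.map
  · rw [familyWeight_comp_embedding, hσ, htight, hm]
    push_cast
    ring

end FamilyWeight

section ListDecoding

variable {n : ℕ} {Q : Type*} [DecidableEq Q]

theorem exists_injective_of_not_listDecodable {C : Set (Fin n → Q)} {r : ℝ} {L : ℕ}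
    (h : ¬ listDecodable C r L) :
    ∃ y : Fin n → Q, ∃ c : Fin (L + 1) → Fin n → Q, Function.Injective c ∧
      ∀ i, c i ∈ C ∧ (hammingDist y (c i) : ℝ) ≤ r * n := by
  simp only [listDecodable, not_forall, not_le] at h
  obtain ⟨y, hy⟩ := h
  set S := {c : Fin n → Q // c ∈ C ∧ (hammingDist y c : ℝ) ≤ r * n}
  have : Finite S := Nat.finite_of_card_ne_zero (by omega)
  have := Fintype.ofFinite S
  obtain ⟨e⟩ := Function.Embedding.nonempty_of_card_le (α := Fin (L + 1)) (β := S)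
    (by rw [Fintype.card_fin, ← Nat.card_eq_fintype_card]; omega)
  exact ⟨y, fun i => e i, fun i j hij => e.injective (Subtype.ext hij), fun i => (e i).2⟩

def agreement (y c : Fin n → Q) : Finset (Fin n) := {x | c x = y x}

theorem card_agreement_add_hammingDist (y c : Fin n → Q) :
    #(agreement y c) + hammingDist y c = n := by
  rw [hammingDist, agreement]
  simp_rw [ne_comm (a := y _)]
  rw [card_filter_add_card_filter_not, card_univ, Fintype.card_fin]

theorem sub_le_card_agreement {y c : Fin n → Q} {ρ : ℝ} (hd : (hammingDist y c : ℝ) ≤ ρ) :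
    (n : ℝ) - ρ ≤ #(agreement y c) := by
  have : (#(agreement y c) : ℝ) + hammingDist y c = n := by
    exact_mod_cast card_agreement_add_hammingDist y c
  linarith

theorem card_agreement_inter_lt {F : Type*} [Field F] [DecidableEq F] {α : Fin n → F}
    (hα : Function.Injective α) {k : ℕ} {f g : F[X]} (hf : f.degree < k) (hg : g.degree < k)
    (hfg : f ≠ g) (y : Fin n → F) :
    #(agreement y (fun x => f.eval (α x)) ∩ agreement y (fun x => g.eval (α x))) < k := by
  by_contra! hle
  let s := (agreement y (fun x => f.eval (α x)) ∩ agreement y (fun x => g.eval (α x))).map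
    ⟨α, hα⟩
  refine hfg (eq_of_degrees_lt_of_eval_finset_eq (s := s) ?_ ?_ fun x hx => ?_)
  · exact hf.trans_le (by rw [card_map]; exact_mod_cast hle)
  · exact hg.trans_le (by rw [card_map]; exact_mod_cast hle)
  · obtain ⟨z, hz, rfl⟩ := mem_map.mp hx
    simp only [agreement, mem_inter, mem_filter, mem_univ, true_and] at hz
    exact hz.1.trans hz.2.symm

theorem exists_polys_of_not_listDecodable {F : Type*} [Field F] [DecidableEq F] {k L : ℕ}
    {α : Fin n → F} (hn : n ≠ 0)
    (h : ¬ listDecodable (RScode F n k α) (((L : ℝ) / (L + 1)) * (1 - (k : ℝ) / n)) L) :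
    ∃ y : Fin n → F, ∃ f : Fin (L + 1) → F[X], Function.Injective f ∧
      (∀ i, (f i).degree < k) ∧
      (L * k : ℤ) ≤ familyWeight (fun i => agreement y (fun x => (f i).eval (α x))) univ := by
  obtain ⟨y, c, hc, hcC⟩ := exists_injective_of_not_listDecodable h
  choose f hdeg hfc using fun i => (hcC i).1
  refine ⟨y, f, fun i j hij => hc (by rw [hfc i, hfc j, hij]), hdeg, ?_⟩
  set A := fun i => agreement y (fun x => (f i).eval (α x))
  have hsum : (n + L * k : ℝ) ≤ ∑ i, (#(A i) : ℝ) := calc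
    (n + L * k : ℝ) = ∑ _ : Fin (L + 1), ((n : ℝ) - (L / (L + 1)) * (1 - k / n) * n) := by
      rw [sum_const, card_univ, Fintype.card_fin, nsmul_eq_mul]
      field_simp
      push_cast
      ring
    _ ≤ ∑ i, (#(A i) : ℝ) :=
      sum_le_sum fun i _ => sub_le_card_agreement (hfc i ▸ (hcC i).2)
  have hunion : #(univ.biUnion A) ≤ n := (card_le_univ _).trans_eq (Fintype.card_fin n)
  rw [familyWeight]
  have : (n + L * k : ℤ) ≤ ∑ i, (#(A i) : ℤ) := by exact_mod_cast hsum
  omega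

end ListDecoding

section IntersectionMatrix

variable {F : Type*} [Field F] {n m k : ℕ}

noncomputable def edgeCoeffs (f : Fin (m + 1) → F[X]) : Edge (m + 1) × Fin k → F :=
  fun c => (f c.1.1.1 + f c.1.1.2).coeff c.2

theorem filter_edges_within_triangle {i j : Fin m} (hij : i < j) :
    ({e : Edge (m + 1) | e.1.1 ∈ ({i.castSucc, j.castSucc, Fin.last m} : Finset (Fin (m + 1))) ∧
      e.1.2 ∈ ({i.castSucc, j.castSucc, Fin.last m} : Finset (Fin (m + 1)))} : Finset _) =
    {⟨(i.castSucc, j.castSucc), Fin.castSucc_lt_castSucc_iff.mpr hij⟩,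
      ⟨(i.castSucc, Fin.last m), Fin.castSucc_lt_last i⟩,
      ⟨(j.castSucc, Fin.last m), Fin.castSucc_lt_last j⟩} := by
  ext ⟨⟨a, b⟩, hab⟩
  simp only [mem_filter, mem_univ, true_and, mem_insert, mem_singleton, Subtype.mk.injEq,
    Prod.mk.injEq, Fin.ext_iff, Fin.val_castSucc, Fin.val_last]
  dsimp only at hab
  have := i.2; have := j.2
  rw [Fin.lt_def] at hij hab
  omega

theorem mulVec_edgeCoeffs_inl [CharP F 2] (I : Fin (m + 1) → Finset (Fin n)) (α : Fin n → F)
    (f : Fin (m + 1) → F[X]) (p : Edge m) (a : Fin k) :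
    ((Mt F n m k I).map (MvPolynomial.eval α)).mulVec (edgeCoeffs f) (Sum.inl (p, a)) = 0 := by
  simp only [Matrix.mulVec, dotProduct, Matrix.map_apply, Mt, Fintype.sum_prod_type]
  simp only [apply_ite (MvPolynomial.eval α), map_one, map_zero, ite_mul, one_mul, zero_mul,
    ← and_assoc]
  simp only [ite_and, sum_ite_irrel, sum_const_zero, sum_ite_eq, mem_univ, if_true]
  simp only [← ite_and, ← sum_filter]
  rw [filter_edges_within_triangle p.2, sum_insert (by simp [Fin.ext_iff]; omega),
    sum_insert (by simp [Fin.ext_iff]; omega), sum_singleton]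
  simp only [edgeCoeffs, coeff_add]
  linear_combination CharTwo.add_self_eq_zero ((f p.1.1.castSucc).coeff a) +
    CharTwo.add_self_eq_zero ((f p.1.2.castSucc).coeff a) +
    CharTwo.add_self_eq_zero ((f (Fin.last m)).coeff a)

theorem mulVec_edgeCoeffs_inr (I : Fin (m + 1) → Finset (Fin n)) (α : Fin n → F)
    {f : Fin (m + 1) → F[X]} (hdeg : ∀ i, (f i).degree < k) (e : Edge (m + 1))
    (x : {x // x ∈ I e.1.1 ∩ I e.1.2}) :
    ((Mt F n m k I).map (MvPolynomial.eval α)).mulVec (edgeCoeffs f) (Sum.inr ⟨e, x⟩) =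
      (f e.1.1 + f e.1.2).eval (α x) := by
  have hmem : f e.1.1 + f e.1.2 ∈ degreeLT F k :=
    add_mem (mem_degreeLT.mpr (hdeg _)) (mem_degreeLT.mpr (hdeg _))
  simp only [Matrix.mulVec, dotProduct, Matrix.map_apply, Mt, Fintype.sum_prod_type]
  simp only [apply_ite (MvPolynomial.eval α), map_pow, MvPolynomial.eval_X, map_zero, ite_mul,
    zero_mul, sum_ite_irrel, sum_const_zero, sum_ite_eq, mem_univ, if_true]
  rw [eval_eq_sum_degreeLTEquiv hmem]
  exact sum_congr rfl fun b _ => mul_comm _ _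

theorem edgeCoeffs_ne_zero [CharP F 2] {f : Fin (m + 1) → F[X]} (hf : Function.Injective f)
    (hdeg : ∀ i, (f i).degree < k) (hm : 1 ≤ m) : edgeCoeffs (k := k) f ≠ 0 := by
  let e₀ : Edge (m + 1) := ⟨(0, Fin.last m), by simp [Fin.lt_def]; omega⟩
  have hmem : f e₀.1.1 + f e₀.1.2 ∈ degreeLT F k :=
    add_mem (mem_degreeLT.mpr (hdeg _)) (mem_degreeLT.mpr (hdeg _))
  have hne : f e₀.1.1 + f e₀.1.2 ≠ 0 := fun h => e₀.2.ne (hf (CharTwo.add_eq_zero.mp h))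
  intro hv
  refine hne ((degreeLTEquiv_eq_zero_iff_eq_zero hmem).mp ?_)
  funext b
  exact congrFun hv (e₀, b)

theorem mulVec_edgeCoeffs_eq_zero [CharP F 2] (I : Fin (m + 1) → Finset (Fin n))
    (α : Fin n → F) (y : Fin n → F) {f : Fin (m + 1) → F[X]} (hdeg : ∀ i, (f i).degree < k)
    (hagree : ∀ i, ∀ x ∈ I i, (f i).eval (α x) = y x) :
    ((Mt F n m k I).map (MvPolynomial.eval α)).mulVec (edgeCoeffs f) = 0 := by
  funext r
  rcases r with ⟨p, a⟩ | ⟨e, x⟩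
  · exact mulVec_edgeCoeffs_inl I α f p a
  · have hx := mem_inter.mp x.2
    rw [mulVec_edgeCoeffs_inr I α hdeg, eval_add, hagree _ _ hx.1, hagree _ _ hx.2]
    exact CharTwo.add_self_eq_zero _

end IntersectionMatrix

theorem stmt_16_general (n k L : ℕ) (hkn : k < n) (hL : 2 ≤ L)
    (F : Type*) [Field F] [DecidableEq F] [CharP F 2]
    (α : Fin n → F) (hα : Function.Injective α)
    (h : ¬ listDecodable (RScode F n k α) (((L : ℝ) / (L + 1)) * (1 - (k : ℝ) / n)) L) :
    ∃ m : ℕ, 2 ≤ m ∧ m ≤ L ∧ ∃ I : Fin (m + 1) → Finset (Fin n),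
      (∀ J : Finset (Fin (m + 1)), J.Nonempty →
        (∑ j ∈ J, ((I j).card : ℤ)) - ((J.biUnion I).card : ℤ) ≤ ((J.card : ℤ) - 1) * k) ∧
      (∑ j, ((I j).card : ℤ)) - ((Finset.univ.biUnion I).card : ℤ) = m * k ∧
      ∃ v : Edge (m + 1) × Fin k → F, v ≠ 0 ∧
        ((Mt F n m k I).map (MvPolynomial.eval α)).mulVec v = 0 := by
  obtain ⟨y, f, hf, hdeg, hwt⟩ := exists_polys_of_not_listDecodable (by omega) h
  obtain ⟨m, hm, hmL, σ, I, hIA, hsub, htight⟩ := exists_tight_family_fin (J₀ := univ) _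
    (fun i _ j _ hij => card_agreement_inter_lt hα (hdeg i) (hdeg j) (hf.ne hij) y)
    (by simp; omega) (by simpa using hwt)
  refine ⟨m, hm, by simpa using hmL, I ∘ σ, hsub, htight, edgeCoeffs (f ∘ σ),
    edgeCoeffs_ne_zero (hf.comp σ.injective) (fun i => hdeg _) (by omega),
    mulVec_edgeCoeffs_eq_zero _ α y (fun i => hdeg _) fun i x hx => ?_⟩
  exact (mem_filter.mp (hIA _ hx)).2

/-- If an `[n,k]`-RS code over a field of characteristic 2 is not
`((L/(L+1))(1−k/n), L)` list-decodable for some `L ≥ 2`, then there exist `t` with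
`3 ≤ t ≤ L+1` (here `t = m+1` with `2 ≤ m ≤ L`) and subsets `I_1,...,I_t ⊆ [n]` such that
(1) `wt(I_J) ≤ (|J|−1)k` for every nonempty `J ⊆ [t]`, (2) `wt(I_{[t]}) = (t−1)k`, and
(3) the evaluated `t`-wise intersection matrix `M_{k,(I_1,...,I_t)}(α)` does not have full
column rank (its columns are linearly dependent, i.e. it has a nonzero kernel vector). -/
theorem stmt_16 (n k L : ℕ) (hk : 0 < k) (hkn : k < n) (hL : 2 ≤ L)
    (F : Type*) [Field F] [Fintype F] [DecidableEq F] [CharP F 2]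
    (α : Fin n → F) (hα : Function.Injective α)
    (h : ¬ listDecodable (RScode F n k α) (((L : ℝ) / (L + 1)) * (1 - (k : ℝ) / n)) L) :
    ∃ m : ℕ, 2 ≤ m ∧ m ≤ L ∧ ∃ I : Fin (m + 1) → Finset (Fin n),
      (∀ J : Finset (Fin (m + 1)), J.Nonempty →
        (∑ j ∈ J, ((I j).card : ℤ)) - ((J.biUnion I).card : ℤ) ≤ ((J.card : ℤ) - 1) * k) ∧
      (∑ j, ((I j).card : ℤ)) - ((Finset.univ.biUnion I).card : ℤ) = m * k ∧
      ∃ v : Edge (m + 1) × Fin k → F, v ≠ 0 ∧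
        ((Mt F n m k I).map (MvPolynomial.eval α)).mulVec v = 0 :=
  stmt_16_general n k L hkn hL F α hα h
end
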